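/- arXiv:2301.09518 — 2 statements merged into one kernel-verified Lean document; each statement's English description precedes it below -/
import Mathlib

section
/- Let (A_i; M_ij; φ_ikj) be a generalised Morita context of size n with unital rings and with A_t = R for a fixed index t, let (R, S; N, L; ζ, θ) be a Morita context, and let (A′_i; M′_ij; φ′_ikj) be their composition. Then the tuple ([A_i; M_ij], [A′_i; M′_ij]; N_m, L_m; |α|, |α′|) is a Morita context between the generalised matrix rings: N_m is an [A_i; M_ij]–[A′_i; M′_ij]-bimodule, L_m is an [A′_i; M′_ij]–[A_i; M_ij]-bimodule, |α| : N_m ⊗_{[A′_i; M′_ij]} L_m → [A_i; M_ij] and |α′| : L_m ⊗_{[A_i; M_ij]} N_m → [A′_i; M′_ij] are bimodule homomorphisms, and the mixed associativity conditions |α|(x ⊗ y)·x′ = x·|α′|(y ⊗ x′) and |α′|(y ⊗ x)·y′ = y·|α|(x ⊗ y′) hold. -/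
universe u

open MulOpposite

/-- A biadditive map `M × X → Z` which is balanced over the ring `A`,
where `ra` is a right `A`-action on `M` and `la` is a left `A`-action on `X`. -/
def IsBalancedMap (A : Type u) [Ring A] {M X Z : Type u}
    [AddCommGroup M] [AddCommGroup X] [AddCommGroup Z]
    (ra : M → A → M) (la : A → X → X) (g : M → X → Z) : Prop :=
  (∀ m m' x, g (m + m') x = g m x + g m' x) ∧
  (∀ m x x', g m (x + x') = g m x + g m x') ∧
  (∀ (a : A) m x, g (ra m a) x = g m (la a x))

/-- `τ : M × X → T` exhibits `T` as the tensor product `M ⊗[A] X` of a right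
`A`-module `M` and a left `A`-module `X`: `τ` is biadditive and `A`-balanced and
every biadditive `A`-balanced map out of `M × X` factors uniquely through `τ`. -/
structure IsBTensor (A : Type u) [Ring A] {M X : Type u}
    [AddCommGroup M] [AddCommGroup X]
    (ra : M → A → M) (la : A → X → X)
    (T : Type u) [AddCommGroup T] (τ : M → X → T) : Prop where
  balanced : IsBalancedMap A ra la τ
  lift : ∀ (Z : Type u) [AddCommGroup Z] (g : M → X → Z),
    IsBalancedMap A ra la g → ∃! h : T →+ Z, ∀ m x, h (τ m x) = g m x

/-- Surjectivity of the additive map `M ⊗ X → Z` induced by `g : M × X → Z`. -/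
def TensorSurj {M X Z : Type u} [AddCommGroup Z] (g : M → X → Z) : Prop :=
  AddSubgroup.closure {z : Z | ∃ m x, z = g m x} = ⊤

/-- A (classical) Morita context `(R, S; N, L; ζ, θ)`: `N` is an `R`–`S`-bimodule,
`L` is an `S`–`R`-bimodule, and `zeta : N ⊗[S] L → R`, `theta : L ⊗[R] N → S` are
bimodule homomorphisms (recorded here as balanced biadditive bilinear maps)
satisfying the mixed associativity conditions. -/
structure MoritaCtx (R S N L : Type u) [Ring R] [Ring S]
    [AddCommGroup N] [AddCommGroup L]
    [Module R N] [Module Sᵐᵒᵖ N] [SMulCommClass R Sᵐᵒᵖ N]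
    [Module S L] [Module Rᵐᵒᵖ L] [SMulCommClass S Rᵐᵒᵖ L] where
  zeta : N → L → R
  theta : L → N → S
  zeta_add_left : ∀ n n' l, zeta (n + n') l = zeta n l + zeta n' l
  zeta_add_right : ∀ n l l', zeta n (l + l') = zeta n l + zeta n l'
  zeta_balanced : ∀ (s : S) n l, zeta (op s • n) l = zeta n (s • l)
  zeta_left : ∀ (r : R) n l, zeta (r • n) l = r * zeta n l
  zeta_right : ∀ (r : R) n l, zeta n (op r • l) = zeta n l * r
  theta_add_left : ∀ l l' n, theta (l + l') n = theta l n + theta l' n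
  theta_add_right : ∀ l n n', theta l (n + n') = theta l n + theta l n'
  theta_balanced : ∀ (r : R) l n, theta (op r • l) n = theta l (r • n)
  theta_left : ∀ (s : S) l n, theta (s • l) n = s * theta l n
  theta_right : ∀ (s : S) l n, theta l (op s • n) = theta l n * s
  assoc_left : ∀ n l n', zeta n l • n' = op (theta l n') • n
  assoc_right : ∀ l n l', theta l n • l' = op (zeta n l') • l

/-- A generalised Morita context `(A_i; M_ij; φ_ikj)` of size `n`:
rings `A i`, `A_i`–`A_j`-bimodules `M i j` with `M i i` identified with the
regular bimodule `A i` via the additive isomorphisms `δ i`, and bimodule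
homomorphisms `φ i k j : M i k ⊗[A k] M k j → M i j` (recorded as balanced
biadditive bilinear maps) which restrict to the action/multiplication maps on
diagonal indices and satisfy the mixed associativity conditions. -/
structure GenMoritaCtx (n : ℕ) (A : Fin n → Type u) (M : Fin n → Fin n → Type u)
    [∀ i, Ring (A i)] [∀ i j, AddCommGroup (M i j)]
    [∀ i j, Module (A i) (M i j)] [∀ i j, Module ((A j)ᵐᵒᵖ) (M i j)]
    [∀ i j, SMulCommClass (A i) ((A j)ᵐᵒᵖ) (M i j)] where
  φ : ∀ i k j, M i k → M k j → M i j
  δ : ∀ i, A i ≃+ M i i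
  φ_add_left : ∀ i k j (x x' : M i k) (y : M k j), φ i k j (x + x') y = φ i k j x y + φ i k j x' y
  φ_add_right : ∀ i k j (x : M i k) (y y' : M k j), φ i k j x (y + y') = φ i k j x y + φ i k j x y'
  φ_balanced : ∀ i k j (a : A k) (x : M i k) (y : M k j), φ i k j (op a • x) y = φ i k j x (a • y)
  φ_smul_left : ∀ i k j (a : A i) (x : M i k) (y : M k j), φ i k j (a • x) y = a • φ i k j x y
  φ_smul_right : ∀ i k j (a : A j) (x : M i k) (y : M k j), φ i k j x (op a • y) = op a • φ i k j x y
  δ_mul_left : ∀ i (a b : A i), δ i (a * b) = a • δ i b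
  δ_mul_right : ∀ i (a b : A i), δ i (a * b) = op b • δ i a
  φ_diag_left : ∀ k j (a : A k) (y : M k j), φ k k j (δ k a) y = a • y
  φ_diag_right : ∀ i k (a : A k) (x : M i k), φ i k k x (δ k a) = op a • x
  φ_assoc : ∀ i h k j (x : M i h) (y : M h k) (z : M k j),
    φ i h j x (φ h k j y z) = φ i k j (φ i h k x y) z

variable {n : ℕ} {A : Fin n → Type u} {M : Fin n → Fin n → Type u}
    [∀ i, Ring (A i)] [∀ i j, AddCommGroup (M i j)]
    [∀ i j, Module (A i) (M i j)] [∀ i j, Module ((A j)ᵐᵒᵖ) (M i j)]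
    [∀ i j, SMulCommClass (A i) ((A j)ᵐᵒᵖ) (M i j)]

/-- The matrix multiplication `(x·y)_{ij} = ∑ k, φ_ikj (x_ik ⊗ y_kj)` on `⊕_{i,j} M i j`. -/
def matMul (ctx : GenMoritaCtx n A M) (x y : ∀ i j, M i j) : ∀ i j, M i j :=
  fun i j => ∑ k, ctx.φ i k j (x i k) (y k j)

/-- The identity matrix: `1_{A_i}` on the diagonal and `0` elsewhere. -/
def matOne (ctx : GenMoritaCtx n A M) : ∀ i j, M i j :=
  fun i j => if h : i = j then cast (congrArg (M i) h) (ctx.δ i 1) else 0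

/-- `ε : Λ ≃ ⊕_{i,j} M i j` exhibits the ring `Λ` as the generalised matrix ring
`[A_i; M_ij]` of the generalised Morita context `ctx`. -/
structure IsMatrixRing (ctx : GenMoritaCtx n A M) (Λ : Type u) [Ring Λ]
    (ε : Λ → ∀ i j, M i j) : Prop where
  bijective : Function.Bijective ε
  map_add : ∀ x y, ε (x + y) = ε x + ε y
  map_mul : ∀ x y, ε (x * y) = matMul ctx (ε x) (ε y)
  map_one : ε 1 = matOne ctx

/-- The scalar multiplication of an explicitly given module structure. -/
def msmul {Λ X : Type u} [Ring Λ] [AddCommGroup X] (inst : Module Λ X) (c : Λ) (x : X) : X :=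
  letI := inst; c • x

section Composition

variable (t : Fin n) (S N L : Type u) [Ring S]
  [AddCommGroup N] [AddCommGroup L]
  [Module (A t) N] [Module Sᵐᵒᵖ N] [SMulCommClass (A t) Sᵐᵒᵖ N]
  [Module S L] [Module ((A t)ᵐᵒᵖ) L] [SMulCommClass S ((A t)ᵐᵒᵖ) L]
  (A' : Fin n → Type u) (M' : Fin n → Fin n → Type u)
  [∀ i, Ring (A' i)] [∀ i j, AddCommGroup (M' i j)]
  [∀ i j, Module (A' i) (M' i j)] [∀ i j, Module ((A' j)ᵐᵒᵖ) (M' i j)]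
  [∀ i j, SMulCommClass (A' i) ((A' j)ᵐᵒᵖ) (M' i j)]

variable (A M)

/-- Data identifying the family `A'`, `M'` with the constituents of the composition
of a generalised Morita context `(A_i; M_ij; φ_ikj)` (with `A t = R`) with a Morita
context `(R, S; N, L; ζ, θ)`:  `A' t = S`, `A' i = A i` for `i ≠ t`, `M' t t = S`,
`M' i t = M i t ⊗[R] N` for `i ≠ t`, `M' t j = L ⊗[R] M t j` for `j ≠ t` and
`M' i j = M i j` for `i, j ≠ t`, where the tensor products are abstract tensor
products (universal property) and the identifications are compatible with all the
actions involved. -/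
structure CompSetup : Type u where
  ρ : ∀ i, i ≠ t → (A' i ≃+* A i)
  ρt : A' t ≃+* S
  ee : ∀ i j, i ≠ t → j ≠ t → (M i j ≃+ M' i j)
  tmulN : ∀ i, i ≠ t → (M i t → N → M' i t)
  tmulL : ∀ j, j ≠ t → (L → M t j → M' t j)
  uS : S ≃+ M' t t
  tmulN_tensor : ∀ i (hi : i ≠ t),
    IsBTensor (A t) (fun (m : M i t) a => op a • m) (fun a (x : N) => a • x)
      (M' i t) (tmulN i hi)
  tmulL_tensor : ∀ j (hj : j ≠ t),
    IsBTensor (A t) (fun (l : L) a => op a • l) (fun a (x : M t j) => a • x)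
      (M' t j) (tmulL j hj)
  ee_smul_left : ∀ i j (hi : i ≠ t) (hj : j ≠ t) (a' : A' i) (x : M i j),
    a' • ee i j hi hj x = ee i j hi hj (ρ i hi a' • x)
  ee_smul_right : ∀ i j (hi : i ≠ t) (hj : j ≠ t) (b' : A' j) (x : M i j),
    op b' • ee i j hi hj x = ee i j hi hj (op (ρ j hj b') • x)
  tmulN_smul_left : ∀ i (hi : i ≠ t) (a' : A' i) (m : M i t) (x : N),
    a' • tmulN i hi m x = tmulN i hi (ρ i hi a' • m) x
  tmulN_smul_right : ∀ i (hi : i ≠ t) (s' : A' t) (m : M i t) (x : N),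
    op s' • tmulN i hi m x = tmulN i hi m (op (ρt s') • x)
  tmulL_smul_left : ∀ j (hj : j ≠ t) (s' : A' t) (l : L) (m : M t j),
    s' • tmulL j hj l m = tmulL j hj (ρt s' • l) m
  tmulL_smul_right : ∀ j (hj : j ≠ t) (b' : A' j) (l : L) (m : M t j),
    op b' • tmulL j hj l m = tmulL j hj l (op (ρ j hj b') • m)
  uS_smul_left : ∀ (s' : A' t) (s : S), s' • uS s = uS (ρt s' * s)
  uS_smul_right : ∀ (s' : A' t) (s : S), op s' • uS s = uS (s * ρt s')

/-- `ctx'` is the composition of the generalised Morita context `ctx` (with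
`A t = R`) with the Morita context `mc = (R, S; N, L; ζ, θ)`: its identity
identifications are the given ones and its structure maps `φ'` are given by the
eight defining formulas of the composition (Definition 3.1 of the paper), stated
on pure tensors through the identifications of `cs`. -/
structure IsComposition (ctx : GenMoritaCtx n A M) (mc : MoritaCtx (A t) S N L)
    (cs : CompSetup A M t S N L A' M') (ctx' : GenMoritaCtx n A' M') : Prop where
  delta_spec : ∀ i (hi : i ≠ t) (a' : A' i),
    ctx'.δ i a' = cs.ee i i hi hi (ctx.δ i (cs.ρ i hi a'))
  delta_t_spec : ∀ s' : A' t, ctx'.δ t s' = cs.uS (cs.ρt s')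
  phi_ttt : ∀ s s' : S, ctx'.φ t t t (cs.uS s) (cs.uS s') = cs.uS (s * s')
  phi_itt : ∀ i (hi : i ≠ t) (m : M i t) (x : N) (s : S),
    ctx'.φ i t t (cs.tmulN i hi m x) (cs.uS s) = cs.tmulN i hi m (op s • x)
  phi_ttj : ∀ j (hj : j ≠ t) (s : S) (l : L) (m : M t j),
    ctx'.φ t t j (cs.uS s) (cs.tmulL j hj l m) = cs.tmulL j hj (s • l) m
  phi_tkt : ∀ k (hk : k ≠ t) (l : L) (m : M t k) (m' : M k t) (x : N),
    ctx'.φ t k t (cs.tmulL k hk l m) (cs.tmulN k hk m' x)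
      = cs.uS (mc.theta (op ((ctx.δ t).symm (ctx.φ t k t m m')) • l) x)
  phi_ikt : ∀ i k (hi : i ≠ t) (hk : k ≠ t) (z : M i k) (m : M k t) (x : N),
    ctx'.φ i k t (cs.ee i k hi hk z) (cs.tmulN k hk m x)
      = cs.tmulN i hi (ctx.φ i k t z m) x
  phi_tkj : ∀ k j (hk : k ≠ t) (hj : j ≠ t) (l : L) (m : M t k) (y : M k j),
    ctx'.φ t k j (cs.tmulL k hk l m) (cs.ee k j hk hj y)
      = cs.tmulL j hj l (ctx.φ t k j m y)
  phi_itj : ∀ i j (hi : i ≠ t) (hj : j ≠ t) (m : M i t) (x : N) (l : L) (m' : M t j),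
    ctx'.φ i t j (cs.tmulN i hi m x) (cs.tmulL j hj l m')
      = cs.ee i j hi hj (ctx.φ i t j (op (mc.zeta x l) • m) m')
  phi_ikj : ∀ i k j (hi : i ≠ t) (hk : k ≠ t) (hj : j ≠ t) (z : M i k) (y : M k j),
    ctx'.φ i k j (cs.ee i k hi hk z) (cs.ee k j hk hj y)
      = cs.ee i j hi hj (ctx.φ i k j z y)

end Composition

section Excision

variable (t : Fin n) (S N L : Type u) [Ring S]
  [AddCommGroup N] [AddCommGroup L]
  [Module (A t) N] [Module Sᵐᵒᵖ N] [SMulCommClass (A t) Sᵐᵒᵖ N]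
  [Module S L] [Module ((A t)ᵐᵒᵖ) L] [SMulCommClass S ((A t)ᵐᵒᵖ) L]
  (A' : Fin n → Type u) (M' : Fin n → Fin n → Type u)
  [∀ i, Ring (A' i)] [∀ i j, AddCommGroup (M' i j)]
  [∀ i j, Module (A' i) (M' i j)] [∀ i j, Module ((A' j)ᵐᵒᵖ) (M' i j)]
  [∀ i j, SMulCommClass (A' i) ((A' j)ᵐᵒᵖ) (M' i j)]
  (NN : Fin n → Fin n → Type u) [∀ i j, AddCommGroup (NN i j)]
  (LL : Fin n → Fin n → Type u) [∀ i j, AddCommGroup (LL i j)]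

variable (A M)

/-- Data identifying the family `NN` with the column-excision: `NN i j = M i j`
for `j ≠ t` and `NN i t = M i t ⊗[R] N` (an abstract tensor product) for all `i`
(in particular `NN t t = (M t t) ⊗[R] N`, i.e. `R ⊗[R] N`). -/
structure ColExc where
  en : ∀ i j, j ≠ t → (M i j ≃+ NN i j)
  π : ∀ i, M i t → N → NN i t
  π_tensor : ∀ i,
    IsBTensor (A t) (fun (m : M i t) a => op a • m) (fun a (x : N) => a • x)
      (NN i t) (π i)

/-- Data identifying the family `LL` with the row-excision: `LL i j = M i j`
for `i ≠ t` and `LL t j = L ⊗[R] M t j` (an abstract tensor product) for all `j`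
(in particular `LL t t = L ⊗[R] (M t t)`, i.e. `L ⊗[R] R`). -/
structure RowExc where
  el : ∀ i j, i ≠ t → (M i j ≃+ LL i j)
  lp : ∀ j, L → M t j → LL t j
  lp_tensor : ∀ j,
    IsBTensor (A t) (fun (l : L) a => op a • l) (fun a (x : M t j) => a • x)
      (LL t j) (lp j)

/-- The component maps `β_ikj` of the left action of the generalised matrix ring
`[A_i; M_ij]` on the column-excision: `β_ikj = φ_ikj` for `j ≠ t` and
`β_ikt = φ_ikt ⊗ 1_N` for `j = t`, stated on pure tensors. -/
structure ColExcLeft (ctx : GenMoritaCtx n A M) (ce : ColExc A M t N NN)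
    (β : ∀ i k j, M i k → NN k j → NN i j) : Prop where
  add_left : ∀ i k j (x x' : M i k) (y : NN k j),
    β i k j (x + x') y = β i k j x y + β i k j x' y
  add_right : ∀ i k j (x : M i k) (y y' : NN k j),
    β i k j x (y + y') = β i k j x y + β i k j x y'
  spec_ne : ∀ i k j (hj : j ≠ t) (x : M i k) (y : M k j),
    β i k j x (ce.en k j hj y) = ce.en i j hj (ctx.φ i k j x y)
  spec_t : ∀ i k (z : M i k) (m : M k t) (x : N),
    β i k t z (ce.π k m x) = ce.π i (ctx.φ i k t z m) x

/-- The component maps `β'_ikj` of the right action of the generalised matrix ring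
`[A'_i; M'_ij]` of the composition on the column-excision, stated on pure tensors
through the identifications: `β'_ikj = φ'_ikj` for `i ≠ t`, and on row `t`:
`β'_ttt(r ⊗ n ⊗ s) = r ⊗ (n·s)`, `β'_ttj(r ⊗ n ⊗ l ⊗ m) = (r·ζ(n ⊗ l))·m` for
`j ≠ t`, `β'_tht = φ_tht ⊗ 1_N` for `h ≠ t` and `β'_thj = φ_thj` for `h, j ≠ t`. -/
structure ColExcRight (ctx : GenMoritaCtx n A M) (mc : MoritaCtx (A t) S N L)
    (cs : CompSetup A M t S N L A' M') (ce : ColExc A M t N NN)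
    (β' : ∀ i k j, NN i k → M' k j → NN i j) : Prop where
  add_left : ∀ i k j (x x' : NN i k) (y : M' k j),
    β' i k j (x + x') y = β' i k j x y + β' i k j x' y
  add_right : ∀ i k j (x : NN i k) (y y' : M' k j),
    β' i k j x (y + y') = β' i k j x y + β' i k j x y'
  spec₁ : ∀ i k j (hk : k ≠ t) (hj : j ≠ t) (x : M i k) (y : M k j),
    β' i k j (ce.en i k hk x) (cs.ee k j hk hj y) = ce.en i j hj (ctx.φ i k j x y)
  spec₂ : ∀ i k (hk : k ≠ t) (x : M i k) (m : M k t) (nn : N),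
    β' i k t (ce.en i k hk x) (cs.tmulN k hk m nn) = ce.π i (ctx.φ i k t x m) nn
  spec₃ : ∀ i j (hj : j ≠ t) (m : M i t) (nn : N) (l : L) (m' : M t j),
    β' i t j (ce.π i m nn) (cs.tmulL j hj l m')
      = ce.en i j hj (ctx.φ i t j (op (mc.zeta nn l) • m) m')
  spec₄ : ∀ i (m : M i t) (nn : N) (s : S),
    β' i t t (ce.π i m nn) (cs.uS s) = ce.π i m (op s • nn)

/-- The component maps `γ'_ikj` of the left action of `[A'_i; M'_ij]` on the
row-excision, stated on pure tensors through the identifications: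
`γ'_ikj = φ'_ikj` for `j ≠ t`, and on column `t`: `γ'_ttt(s ⊗ l ⊗ r) = (s·l) ⊗ r`,
`γ'_tkt = 1_L ⊗ φ_tkt` for `k ≠ t`, `γ'_itt(m ⊗ n ⊗ l ⊗ r) = m·(ζ(n ⊗ l)·r)` for
`i ≠ t` and `γ'_ikt = φ_ikt` for `i, k ≠ t`. -/
structure RowExcLeft (ctx : GenMoritaCtx n A M) (mc : MoritaCtx (A t) S N L)
    (cs : CompSetup A M t S N L A' M') (re : RowExc A M t L LL)
    (γ' : ∀ i k j, M' i k → LL k j → LL i j) : Prop where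
  add_left : ∀ i k j (x x' : M' i k) (y : LL k j),
    γ' i k j (x + x') y = γ' i k j x y + γ' i k j x' y
  add_right : ∀ i k j (x : M' i k) (y y' : LL k j),
    γ' i k j x (y + y') = γ' i k j x y + γ' i k j x y'
  spec₁ : ∀ i k j (hi : i ≠ t) (hk : k ≠ t) (x : M i k) (y : M k j),
    γ' i k j (cs.ee i k hi hk x) (re.el k j hk y) = re.el i j hi (ctx.φ i k j x y)
  spec₂ : ∀ k j (hk : k ≠ t) (l : L) (m : M t k) (y : M k j),
    γ' t k j (cs.tmulL k hk l m) (re.el k j hk y) = re.lp j l (ctx.φ t k j m y)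
  spec₃ : ∀ i j (hi : i ≠ t) (m : M i t) (nn : N) (l : L) (m' : M t j),
    γ' i t j (cs.tmulN i hi m nn) (re.lp j l m')
      = re.el i j hi (ctx.φ i t j (op (mc.zeta nn l) • m) m')
  spec₄ : ∀ j (s : S) (l : L) (m : M t j),
    γ' t t j (cs.uS s) (re.lp j l m) = re.lp j (s • l) m

/-- The component maps `γ_ikj` of the right action of `[A_i; M_ij]` on the
row-excision: `γ_ikj = φ_ikj` for `i ≠ t` and `γ_tkj = 1_L ⊗ φ_tkj` on row `t`,
stated on pure tensors. -/
structure RowExcRight (ctx : GenMoritaCtx n A M) (re : RowExc A M t L LL)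
    (γ : ∀ i k j, LL i k → M k j → LL i j) : Prop where
  add_left : ∀ i k j (x x' : LL i k) (y : M k j),
    γ i k j (x + x') y = γ i k j x y + γ i k j x' y
  add_right : ∀ i k j (x : LL i k) (y y' : M k j),
    γ i k j x (y + y') = γ i k j x y + γ i k j x y'
  spec_ne : ∀ i k j (hi : i ≠ t) (x : M i k) (y : M k j),
    γ i k j (re.el i k hi x) y = re.el i j hi (ctx.φ i k j x y)
  spec_t : ∀ k j (l : L) (m : M t k) (y : M k j),
    γ t k j (re.lp k l m) y = re.lp j l (ctx.φ t k j m y)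

/-- The component maps `α_ikj : N_ik ⊗ L_kj → M_ij` of the column-row ligation:
`α_ikj = φ_ikj` for `k ≠ t` and
`α_itj(m ⊗ n ⊗ l ⊗ m') = φ_itj((m·ζ(n ⊗ l)) ⊗ m')` for `k = t`,
stated on pure tensors. -/
structure ColRowLigation (ctx : GenMoritaCtx n A M) (mc : MoritaCtx (A t) S N L)
    (ce : ColExc A M t N NN) (re : RowExc A M t L LL)
    (α : ∀ i k j, NN i k → LL k j → M i j) : Prop where
  add_left : ∀ i k j (x x' : NN i k) (y : LL k j),
    α i k j (x + x') y = α i k j x y + α i k j x' y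
  add_right : ∀ i k j (x : NN i k) (y y' : LL k j),
    α i k j x (y + y') = α i k j x y + α i k j x y'
  spec_ne : ∀ i k j (hk : k ≠ t) (x : M i k) (y : M k j),
    α i k j (ce.en i k hk x) (re.el k j hk y) = ctx.φ i k j x y
  spec_t : ∀ i j (m : M i t) (nn : N) (l : L) (m' : M t j),
    α i t j (ce.π i m nn) (re.lp j l m') = ctx.φ i t j (op (mc.zeta nn l) • m) m'

/-- The component maps `α'_ikj : L_ik ⊗ N_kj → M'_ij` of the row-column ligation:
`α'_ikj = φ_ikj` for `i, j ≠ t`, `α'_ikt = φ_ikt ⊗ 1_N` for `i ≠ t = j`,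
`α'_tkj = 1_L ⊗ φ_tkj` for `i = t ≠ j` and
`α'_tkt(l ⊗ m ⊗ m' ⊗ n) = θ((l·φ_tkt(m ⊗ m')) ⊗ n)` for `i = t = j`,
stated on pure tensors through the identifications. -/
structure RowColLigation (ctx : GenMoritaCtx n A M) (mc : MoritaCtx (A t) S N L)
    (cs : CompSetup A M t S N L A' M') (ce : ColExc A M t N NN)
    (re : RowExc A M t L LL)
    (α' : ∀ i k j, LL i k → NN k j → M' i j) : Prop where
  add_left : ∀ i k j (x x' : LL i k) (y : NN k j),
    α' i k j (x + x') y = α' i k j x y + α' i k j x' y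
  add_right : ∀ i k j (x : LL i k) (y y' : NN k j),
    α' i k j x (y + y') = α' i k j x y + α' i k j x y'
  spec₁ : ∀ i k j (hi : i ≠ t) (hj : j ≠ t) (x : M i k) (y : M k j),
    α' i k j (re.el i k hi x) (ce.en k j hj y) = cs.ee i j hi hj (ctx.φ i k j x y)
  spec₂ : ∀ i k (hi : i ≠ t) (x : M i k) (m : M k t) (nn : N),
    α' i k t (re.el i k hi x) (ce.π k m nn) = cs.tmulN i hi (ctx.φ i k t x m) nn
  spec₃ : ∀ k j (hj : j ≠ t) (l : L) (m : M t k) (y : M k j),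
    α' t k j (re.lp k l m) (ce.en k j hj y) = cs.tmulL j hj l (ctx.φ t k j m y)
  spec₄ : ∀ k (l : L) (m : M t k) (m' : M k t) (nn : N),
    α' t k t (re.lp k l m) (ce.π k m' nn)
      = cs.uS (mc.theta (op ((ctx.δ t).symm (ctx.φ t k t m m')) • l) nn)

end Excision

/-!
All eight identities are checked entry by entry. The actions of the generalised matrix rings
on `N_m` and `L_m` and the maps `|α|`, `|α'|` are block matrix products, and a block matrix
product is associative as soon as its component maps are. So each identity reduces to an
associativity law between component maps, which is checked on generators: away from the
index `t` every component is a structure map `φ_ikj` of the original context, and the law is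
the associativity of `φ`; in row or column `t` one reduces to pure tensors, where the law
follows from the defining formulas of the composition and, in the corner entries, from the
Morita identities `ζ(n ⊗ l)·n' = n·θ(l ⊗ n')` and `θ(l ⊗ n)·l' = l·ζ(n ⊗ l')`.
-/

section BlockMul

variable {ι : Type*} [Fintype ι]

def blockMul {X Y Z : ι → ι → Type*} [∀ i j, AddCommMonoid (Z i j)]
    (μ : ∀ i k j, X i k → Y k j → Z i j) (x : ∀ i k, X i k) (y : ∀ k j, Y k j) :
    ∀ i j, Z i j :=
  fun i j => ∑ k, μ i k j (x i k) (y k j)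

theorem blockMul_assoc {X Y Z XY YZ W : ι → ι → Type*} [∀ i j, AddCommGroup (XY i j)]
    [∀ i j, AddCommGroup (YZ i j)] [∀ i j, AddCommGroup (W i j)]
    {μ₁ : ∀ i h k, X i h → Y h k → XY i k} {μ₂ : ∀ i k j, XY i k → Z k j → W i j}
    {ν₁ : ∀ h k j, Y h k → Z k j → YZ h j} {ν₂ : ∀ i h j, X i h → YZ h j → W i j}
    (hμ₂ : ∀ i k j a b z, μ₂ i k j (a + b) z = μ₂ i k j a z + μ₂ i k j b z)
    (hν₂ : ∀ i h j x a b, ν₂ i h j x (a + b) = ν₂ i h j x a + ν₂ i h j x b)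
    (h : ∀ i h k j x y z, μ₂ i k j (μ₁ i h k x y) z = ν₂ i h j x (ν₁ h k j y z))
    (x : ∀ i h, X i h) (y : ∀ h k, Y h k) (z : ∀ k j, Z k j) :
    blockMul μ₂ (blockMul μ₁ x y) z = blockMul ν₂ x (blockMul ν₁ y z) := by
  funext i j
  calc ∑ k, μ₂ i k j (∑ h, μ₁ i h k (x i h) (y h k)) (z k j)
      = ∑ k, ∑ h, μ₂ i k j (μ₁ i h k (x i h) (y h k)) (z k j) := by
        refine Finset.sum_congr rfl fun k _ => ?_
        exact map_sum (AddMonoidHom.mk' (μ₂ i k j · (z k j)) (hμ₂ i k j · · _)) _ _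
    _ = ∑ h, ∑ k, ν₂ i h j (x i h) (ν₁ h k j (y h k) (z k j)) := by
        rw [Finset.sum_comm]; simp only [h]
    _ = ∑ h, ν₂ i h j (x i h) (∑ k, ν₁ h k j (y h k) (z k j)) := by
        refine Finset.sum_congr rfl fun h _ => ?_
        exact (map_sum (AddMonoidHom.mk' (ν₂ i h j (x i h)) (hν₂ i h j _)) _ _).symm

end BlockMul

section Tensor

variable {R : Type u} [Ring R] {X Y T : Type u} [AddCommGroup X] [AddCommGroup Y]
  [AddCommGroup T] {ra : X → R → X} {la : R → Y → Y} {τ : X → Y → T}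

theorem IsBTensor.closure_eq_top (ht : IsBTensor R ra la T τ) :
    AddSubgroup.closure {z | ∃ m x, z = τ m x} = ⊤ := by
  set T₀ := AddSubgroup.closure {z | ∃ m x, z = τ m x}
  have mem (m x) : τ m x ∈ T₀ := AddSubgroup.subset_closure ⟨m, x, rfl⟩
  obtain ⟨add_left, add_right, bal⟩ := ht.balanced
  obtain ⟨h₀, hh₀, -⟩ := ht.lift T₀ (fun m x => ⟨τ m x, mem m x⟩)
    ⟨fun m m' x => Subtype.ext (add_left m m' x), fun m x x' => Subtype.ext (add_right m x x'),
      fun a m x => Subtype.ext (bal a m x)⟩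
  obtain ⟨_, -, huniq⟩ := ht.lift T τ ht.balanced
  have hsection : T₀.subtype.comp h₀ = AddMonoidHom.id T :=
    (huniq _ fun m x => congrArg Subtype.val (hh₀ m x)).trans (huniq _ fun _ _ => rfl).symm
  refine eq_top_iff.2 fun z _ => ?_
  rw [← AddMonoidHom.id_apply T z, ← hsection]
  exact (h₀ z).2

theorem IsBTensor.zero_left (ht : IsBTensor R ra la T τ) (x : Y) : τ 0 x = 0 :=
  (AddMonoidHom.mk' (τ · x) fun m m' => ht.balanced.1 m m' x).map_zero

theorem IsBTensor.neg_left (ht : IsBTensor R ra la T τ) (m : X) (x : Y) :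
    τ (-m) x = -τ m x :=
  (AddMonoidHom.mk' (τ · x) fun m m' => ht.balanced.1 m m' x).map_neg m

/-- No zero case is needed since `0 = τ 0 0`. -/
@[elab_as_elim]
theorem IsBTensor.induction_on (ht : IsBTensor R ra la T τ) {motive : T → Prop} (z : T)
    (tmul : ∀ m x, motive (τ m x)) (add : ∀ a b, motive a → motive b → motive (a + b)) :
    motive z := by
  have hz : z ∈ AddSubgroup.closure {z | ∃ m x, z = τ m x} := by
    rw [ht.closure_eq_top]; trivial
  induction hz using AddSubgroup.closure_induction'' with
  | mem _ h => obtain ⟨m, x, rfl⟩ := h; exact tmul m x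
  | neg_mem _ h => obtain ⟨m, x, rfl⟩ := h; rw [← ht.neg_left]; exact tmul (-m) x
  | zero => rw [← ht.zero_left 0]; exact tmul 0 0
  | add a b _ _ ha hb => exact add a b ha hb

end Tensor

section Ligation

variable {t : Fin n} {S N L : Type u} [Ring S] [AddCommGroup N] [AddCommGroup L]
  [Module (A t) N] [Module Sᵐᵒᵖ N] [SMulCommClass (A t) Sᵐᵒᵖ N]
  [Module S L] [Module ((A t)ᵐᵒᵖ) L] [SMulCommClass S ((A t)ᵐᵒᵖ) L]
  {A' : Fin n → Type u} {M' : Fin n → Fin n → Type u}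
  [∀ i, Ring (A' i)] [∀ i j, AddCommGroup (M' i j)]
  [∀ i j, Module (A' i) (M' i j)] [∀ i j, Module ((A' j)ᵐᵒᵖ) (M' i j)]
  {NN LL : Fin n → Fin n → Type u} [∀ i j, AddCommGroup (NN i j)]
  [∀ i j, AddCommGroup (LL i j)]
  {ctx : GenMoritaCtx n A M} {mc : MoritaCtx (A t) S N L} {cs : CompSetup A M t S N L A' M'}
  {ce : ColExc A M t N NN} {re : RowExc A M t L LL}
  {β : ∀ i k j, M i k → NN k j → NN i j} {β' : ∀ i k j, NN i k → M' k j → NN i j}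
  {γ' : ∀ i k j, M' i k → LL k j → LL i j} {γ : ∀ i k j, LL i k → M k j → LL i j}
  {α : ∀ i k j, NN i k → LL k j → M i j} {α' : ∀ i k j, LL i k → NN k j → M' i j}

/-- With `g` standing for `M i t ⊗[A t] N`:
`(m·ζ(n ⊗ l)·m₁·m₂) ⊗ n₂ = m ⊗ n·θ(l·m₁m₂ ⊗ n₂)`. -/
theorem GenMoritaCtx.tensorN_zeta_eq_theta (ctx : GenMoritaCtx n A M)
    (mc : MoritaCtx (A t) S N L) {Z : Type u} (i k : Fin n) (g : M i t → N → Z)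
    (hg : ∀ (a : A t) m x, g (op a • m) x = g m (a • x))
    (m : M i t) (m₁ : M t k) (m₂ : M k t) (nn nn₂ : N) (l : L) :
    g (ctx.φ i k t (ctx.φ i t k (op (mc.zeta nn l) • m) m₁) m₂) nn₂
      = g m (op (mc.theta (op ((ctx.δ t).symm (ctx.φ t k t m₁ m₂)) • l) nn₂) • nn) := by
  obtain ⟨a, ha⟩ := (ctx.δ t).surjective (ctx.φ t k t m₁ m₂)
  rw [← ha, AddEquiv.symm_apply_apply, ctx.φ_balanced, ← ctx.φ_assoc, ctx.φ_smul_left,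
    ← ha, ← ctx.δ_mul_left, ctx.φ_diag_right, hg, mul_smul, mc.theta_balanced,
    ← mc.assoc_left]

/-- With `g` standing for `L ⊗[A t] M t j`:
`l ⊗ m·m₂·ζ(n ⊗ l₂)·m₃ = θ(l·mm₂ ⊗ n)·l₂ ⊗ m₃`. -/
theorem GenMoritaCtx.tensorL_zeta_eq_theta (ctx : GenMoritaCtx n A M)
    (mc : MoritaCtx (A t) S N L) {Z : Type u} (k j : Fin n) (g : L → M t j → Z)
    (hg : ∀ (a : A t) l x, g (op a • l) x = g l (a • x))
    (m : M t k) (m₂ : M k t) (m₃ : M t j) (nn : N) (l l₂ : L) :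
    g l (ctx.φ t k j m (ctx.φ k t j (op (mc.zeta nn l₂) • m₂) m₃))
      = g (mc.theta (op ((ctx.δ t).symm (ctx.φ t k t m m₂)) • l) nn • l₂) m₃ := by
  obtain ⟨a, ha⟩ := (ctx.δ t).surjective (ctx.φ t k t m m₂)
  rw [ctx.φ_balanced, ctx.φ_assoc, ← ha, AddEquiv.symm_apply_apply, ctx.φ_diag_left,
    smul_smul, ← hg, mc.assoc_right, smul_smul, ← op_mul]

theorem ColRowLigation.balanced (hα : ColRowLigation A M t S N L NN LL ctx mc ce re α)
    (hβ' : ColExcRight A M t S N L A' M' NN ctx mc cs ce β')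
    (hγ' : RowExcLeft A M t S N L A' M' LL ctx mc cs re γ')
    (i h k j : Fin n) (u : NN i h) (v : M' h k) (w : LL k j) :
    α i k j (β' i h k u v) w = α i h j u (γ' h k j v w) := by
  by_cases hh : h = t
  · subst h
    induction u using (ce.π_tensor i).induction_on with
    | add a b ha hb => simp only [hβ'.add_left, hα.add_left, ha, hb]
    | tmul m nn =>
      by_cases hk : k = t
      · subst k
        obtain ⟨s, rfl⟩ := cs.uS.surjective v
        induction w using (re.lp_tensor j).induction_on with
        | add a b ha hb => simp only [hγ'.add_right, hα.add_right, ha, hb]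
        | tmul l m' => simp only [hβ'.spec₄, hγ'.spec₄, hα.spec_t, mc.zeta_balanced]
      · obtain ⟨y, rfl⟩ := (re.el k j hk).surjective w
        induction v using (cs.tmulL_tensor k hk).induction_on with
        | add a b ha hb =>
          simp only [hβ'.add_right, hγ'.add_left, hα.add_left, hα.add_right, ha, hb]
        | tmul l z => simp only [hβ'.spec₃, hγ'.spec₂, hα.spec_ne, hα.spec_t, ctx.φ_assoc]
  · obtain ⟨x, rfl⟩ := (ce.en i h hh).surjective u
    by_cases hk : k = t
    · subst k
      induction v using (cs.tmulN_tensor h hh).induction_on with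
      | add a b ha hb =>
        simp only [hβ'.add_right, hγ'.add_left, hα.add_left, hα.add_right, ha, hb]
      | tmul m nn =>
        induction w using (re.lp_tensor j).induction_on with
        | add a b ha hb => simp only [hγ'.add_right, hα.add_right, ha, hb]
        | tmul l m' => simp only [hβ'.spec₂, hγ'.spec₃, hα.spec_t, hα.spec_ne,
            ← ctx.φ_smul_right, ctx.φ_assoc]
    · obtain ⟨z, rfl⟩ := (cs.ee h k hh hk).surjective v
      obtain ⟨y, rfl⟩ := (re.el k j hk).surjective w
      simp only [hβ'.spec₁, hγ'.spec₁, hα.spec_ne, ctx.φ_assoc]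

theorem RowColLigation.balanced
    (hα' : RowColLigation A M t S N L A' M' NN LL ctx mc cs ce re α')
    (hβ : ColExcLeft A M t N NN ctx ce β) (hγ : RowExcRight A M t L LL ctx re γ)
    (i h k j : Fin n) (u : LL i h) (v : M h k) (w : NN k j) :
    α' i k j (γ i h k u v) w = α' i h j u (β h k j v w) := by
  by_cases hi : i = t
  · subst i
    induction u using (re.lp_tensor h).induction_on with
    | add a b ha hb => simp only [hγ.add_left, hα'.add_left, ha, hb]
    | tmul l m =>
      by_cases hj : j = t
      · subst j
        induction w using (ce.π_tensor k).induction_on with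
        | add a b ha hb => simp only [hβ.add_right, hα'.add_right, ha, hb]
        | tmul m' nn => simp only [hγ.spec_t, hβ.spec_t, hα'.spec₄, ctx.φ_assoc]
      · obtain ⟨y, rfl⟩ := (ce.en k j hj).surjective w
        simp only [hγ.spec_t, hβ.spec_ne, hα'.spec₃, ctx.φ_assoc]
  · obtain ⟨x, rfl⟩ := (re.el i h hi).surjective u
    by_cases hj : j = t
    · subst j
      induction w using (ce.π_tensor k).induction_on with
      | add a b ha hb => simp only [hβ.add_right, hα'.add_right, ha, hb]
      | tmul m nn => simp only [hγ.spec_ne, hβ.spec_t, hα'.spec₂, ctx.φ_assoc]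
    · obtain ⟨y, rfl⟩ := (ce.en k j hj).surjective w
      simp only [hγ.spec_ne, hβ.spec_ne, hα'.spec₁, ctx.φ_assoc]

theorem ColRowLigation.map_smul_left (hα : ColRowLigation A M t S N L NN LL ctx mc ce re α)
    (hβ : ColExcLeft A M t N NN ctx ce β)
    (i k h j : Fin n) (z : M i k) (u : NN k h) (w : LL h j) :
    α i h j (β i k h z u) w = ctx.φ i k j z (α k h j u w) := by
  by_cases hh : h = t
  · subst h
    induction u using (ce.π_tensor k).induction_on with
    | add a b ha hb => simp only [hβ.add_right, hα.add_left, ctx.φ_add_right, ha, hb]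
    | tmul m nn =>
      induction w using (re.lp_tensor j).induction_on with
      | add a b ha hb => simp only [hα.add_right, ctx.φ_add_right, ha, hb]
      | tmul l m' => simp only [hβ.spec_t, hα.spec_t, ← ctx.φ_smul_right, ctx.φ_assoc]
  · obtain ⟨x, rfl⟩ := (ce.en k h hh).surjective u
    obtain ⟨y, rfl⟩ := (re.el h j hh).surjective w
    simp only [hβ.spec_ne, hα.spec_ne, ctx.φ_assoc]

theorem ColRowLigation.map_smul_right (hα : ColRowLigation A M t S N L NN LL ctx mc ce re α)
    (hγ : RowExcRight A M t L LL ctx re γ)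
    (i h k j : Fin n) (u : NN i h) (w : LL h k) (z : M k j) :
    ctx.φ i k j (α i h k u w) z = α i h j u (γ h k j w z) := by
  by_cases hh : h = t
  · subst h
    induction u using (ce.π_tensor i).induction_on with
    | add a b ha hb => simp only [hα.add_left, ctx.φ_add_left, ha, hb]
    | tmul m nn =>
      induction w using (re.lp_tensor k).induction_on with
      | add a b ha hb => simp only [hγ.add_left, hα.add_right, ctx.φ_add_left, ha, hb]
      | tmul l m' => simp only [hγ.spec_t, hα.spec_t, ctx.φ_assoc]
  · obtain ⟨x, rfl⟩ := (ce.en i h hh).surjective u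
    obtain ⟨y, rfl⟩ := (re.el h k hh).surjective w
    simp only [hγ.spec_ne, hα.spec_ne, ctx.φ_assoc]

theorem ligation_assoc_left (hα : ColRowLigation A M t S N L NN LL ctx mc ce re α)
    (hα' : RowColLigation A M t S N L A' M' NN LL ctx mc cs ce re α')
    (hβ : ColExcLeft A M t N NN ctx ce β)
    (hβ' : ColExcRight A M t S N L A' M' NN ctx mc cs ce β')
    (i h k j : Fin n) (u : NN i h) (w : LL h k) (v : NN k j) :
    β i k j (α i h k u w) v = β' i h j u (α' h k j w v) := by
  by_cases hh : h = t
  · subst h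
    induction u using (ce.π_tensor i).induction_on with
    | add a b ha hb => simp only [hα.add_left, hβ.add_left, hβ'.add_left, ha, hb]
    | tmul m nn =>
      induction w using (re.lp_tensor k).induction_on with
      | add a b ha hb =>
        simp only [hα.add_right, hβ.add_left, hα'.add_left, hβ'.add_right, ha, hb]
      | tmul l m₁ =>
        by_cases hj : j = t
        · subst j
          induction v using (ce.π_tensor k).induction_on with
          | add a b ha hb => simp only [hβ.add_right, hα'.add_right, hβ'.add_right, ha, hb]
          | tmul m₂ nn₂ =>
            simp only [hα.spec_t, hβ.spec_t, hα'.spec₄, hβ'.spec₄]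
            exact ctx.tensorN_zeta_eq_theta mc i k (ce.π i) (ce.π_tensor i).balanced.2.2
              m m₁ m₂ nn nn₂ l
        · obtain ⟨z, rfl⟩ := (ce.en k j hj).surjective v
          simp only [hα.spec_t, hβ.spec_ne, hα'.spec₃, hβ'.spec₃, ctx.φ_assoc]
  · obtain ⟨x, rfl⟩ := (ce.en i h hh).surjective u
    obtain ⟨y, rfl⟩ := (re.el h k hh).surjective w
    by_cases hj : j = t
    · subst j
      induction v using (ce.π_tensor k).induction_on with
      | add a b ha hb => simp only [hβ.add_right, hα'.add_right, hβ'.add_right, ha, hb]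
      | tmul m nn => simp only [hα.spec_ne, hβ.spec_t, hα'.spec₂, hβ'.spec₂, ctx.φ_assoc]
    · obtain ⟨z, rfl⟩ := (ce.en k j hj).surjective v
      simp only [hα.spec_ne, hβ.spec_ne, hα'.spec₁, hβ'.spec₁, ctx.φ_assoc]

theorem ligation_assoc_right (hα : ColRowLigation A M t S N L NN LL ctx mc ce re α)
    (hα' : RowColLigation A M t S N L A' M' NN LL ctx mc cs ce re α')
    (hγ : RowExcRight A M t L LL ctx re γ)
    (hγ' : RowExcLeft A M t S N L A' M' LL ctx mc cs re γ')
    (i h k j : Fin n) (u : LL i h) (w : NN h k) (v : LL k j) :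
    γ' i k j (α' i h k u w) v = γ i h j u (α h k j w v) := by
  by_cases hi : i = t
  · subst i
    induction u using (re.lp_tensor h).induction_on with
    | add a b ha hb => simp only [hα'.add_left, hγ'.add_left, hγ.add_left, ha, hb]
    | tmul l m =>
      by_cases hk : k = t
      · subst k
        induction w using (ce.π_tensor h).induction_on with
        | add a b ha hb =>
          simp only [hα'.add_right, hγ'.add_left, hα.add_left, hγ.add_right, ha, hb]
        | tmul m₂ nn =>
          induction v using (re.lp_tensor j).induction_on with
          | add a b ha hb => simp only [hγ'.add_right, hα.add_right, hγ.add_right, ha, hb]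
          | tmul l₂ m₃ =>
            simp only [hα'.spec₄, hγ'.spec₄, hα.spec_t, hγ.spec_t]
            exact (ctx.tensorL_zeta_eq_theta mc h j (re.lp j) (re.lp_tensor j).balanced.2.2
              m m₂ m₃ nn l l₂).symm
      · obtain ⟨y, rfl⟩ := (ce.en h k hk).surjective w
        obtain ⟨z, rfl⟩ := (re.el k j hk).surjective v
        simp only [hα'.spec₃, hγ'.spec₂, hα.spec_ne, hγ.spec_t, ctx.φ_assoc]
  · obtain ⟨x, rfl⟩ := (re.el i h hi).surjective u
    by_cases hk : k = t
    · subst k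
      induction w using (ce.π_tensor h).induction_on with
      | add a b ha hb =>
        simp only [hα'.add_right, hγ'.add_left, hα.add_left, hγ.add_right, ha, hb]
      | tmul m nn =>
        induction v using (re.lp_tensor j).induction_on with
        | add a b ha hb => simp only [hγ'.add_right, hα.add_right, hγ.add_right, ha, hb]
        | tmul l m₂ => simp only [hα'.spec₂, hγ'.spec₃, hα.spec_t, hγ.spec_ne,
            ← ctx.φ_smul_right, ctx.φ_assoc]
    · obtain ⟨y, rfl⟩ := (ce.en h k hk).surjective w
      obtain ⟨z, rfl⟩ := (re.el k j hk).surjective v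
      simp only [hα'.spec₁, hγ'.spec₁, hα.spec_ne, hγ.spec_ne, ctx.φ_assoc]

variable [∀ i j, SMulCommClass (A' i) ((A' j)ᵐᵒᵖ) (M' i j)] {ctx' : GenMoritaCtx n A' M'}

theorem RowColLigation.map_smul_left_of_eq
    (hα' : RowColLigation A M t S N L A' M' NN LL ctx mc cs ce re α')
    (hγ' : RowExcLeft A M t S N L A' M' LL ctx mc cs re γ')
    (hcomp : IsComposition A M t S N L A' M' ctx mc cs ctx')
    {i : Fin n} (hi : i = t) (k h j : Fin n) (v : M' i k) (u : LL k h) (w : NN h j) :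
    α' i h j (γ' i k h v u) w = ctx'.φ i k j v (α' k h j u w) := by
  subst i
  by_cases hk : k = t
  · subst k
    obtain ⟨s, rfl⟩ := cs.uS.surjective v
    induction u using (re.lp_tensor h).induction_on with
    | add a b ha hb => simp only [hγ'.add_right, hα'.add_left, ctx'.φ_add_right, ha, hb]
    | tmul l m =>
      by_cases hj : j = t
      · subst j
        induction w using (ce.π_tensor h).induction_on with
        | add a b ha hb => simp only [hα'.add_right, ctx'.φ_add_right, ha, hb]
        | tmul m' nn =>
          simp only [hγ'.spec₄, hα'.spec₄, hcomp.phi_ttt]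
          rw [← smul_comm, mc.theta_left]
      · obtain ⟨y, rfl⟩ := (ce.en h j hj).surjective w
        simp only [hγ'.spec₄, hα'.spec₃, hcomp.phi_ttj]
  · obtain ⟨x, rfl⟩ := (re.el k h hk).surjective u
    induction v using (cs.tmulL_tensor k hk).induction_on with
    | add a b ha hb => simp only [hγ'.add_left, hα'.add_left, ctx'.φ_add_left, ha, hb]
    | tmul l m =>
      by_cases hj : j = t
      · subst j
        induction w using (ce.π_tensor h).induction_on with
        | add a b ha hb => simp only [hα'.add_right, ctx'.φ_add_right, ha, hb]
        | tmul m' nn =>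
          simp only [hγ'.spec₂, hα'.spec₄, hα'.spec₂, hcomp.phi_tkt, ctx.φ_assoc]
      · obtain ⟨y, rfl⟩ := (ce.en h j hj).surjective w
        simp only [hγ'.spec₂, hα'.spec₃, hα'.spec₁, hcomp.phi_tkj, ctx.φ_assoc]

theorem RowColLigation.map_smul_left_of_ne
    (hα' : RowColLigation A M t S N L A' M' NN LL ctx mc cs ce re α')
    (hγ' : RowExcLeft A M t S N L A' M' LL ctx mc cs re γ')
    (hcomp : IsComposition A M t S N L A' M' ctx mc cs ctx')
    {i : Fin n} (hi : i ≠ t) (k h j : Fin n) (v : M' i k) (u : LL k h) (w : NN h j) :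
    α' i h j (γ' i k h v u) w = ctx'.φ i k j v (α' k h j u w) := by
  by_cases hk : k = t
  · subst k
    induction v using (cs.tmulN_tensor i hi).induction_on with
    | add a b ha hb => simp only [hγ'.add_left, hα'.add_left, ctx'.φ_add_left, ha, hb]
    | tmul m nn =>
      induction u using (re.lp_tensor h).induction_on with
      | add a b ha hb => simp only [hγ'.add_right, hα'.add_left, ctx'.φ_add_right, ha, hb]
      | tmul l m₁ =>
        by_cases hj : j = t
        · subst j
          induction w using (ce.π_tensor h).induction_on with
          | add a b ha hb => simp only [hα'.add_right, ctx'.φ_add_right, ha, hb]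
          | tmul m₂ nn₂ =>
            simp only [hγ'.spec₃, hα'.spec₂, hα'.spec₄, hcomp.phi_itt]
            exact ctx.tensorN_zeta_eq_theta mc i h (cs.tmulN i hi)
              (cs.tmulN_tensor i hi).balanced.2.2 m m₁ m₂ nn nn₂ l
        · obtain ⟨y, rfl⟩ := (ce.en h j hj).surjective w
          simp only [hγ'.spec₃, hα'.spec₁, hα'.spec₃, hcomp.phi_itj, ctx.φ_assoc]
  · obtain ⟨z, rfl⟩ := (cs.ee i k hi hk).surjective v
    obtain ⟨x, rfl⟩ := (re.el k h hk).surjective u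
    by_cases hj : j = t
    · subst j
      induction w using (ce.π_tensor h).induction_on with
      | add a b ha hb => simp only [hα'.add_right, ctx'.φ_add_right, ha, hb]
      | tmul m nn => simp only [hγ'.spec₁, hα'.spec₂, hcomp.phi_ikt, ctx.φ_assoc]
    · obtain ⟨y, rfl⟩ := (ce.en h j hj).surjective w
      simp only [hγ'.spec₁, hα'.spec₁, hcomp.phi_ikj, ctx.φ_assoc]

theorem RowColLigation.map_smul_left
    (hα' : RowColLigation A M t S N L A' M' NN LL ctx mc cs ce re α')
    (hγ' : RowExcLeft A M t S N L A' M' LL ctx mc cs re γ')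
    (hcomp : IsComposition A M t S N L A' M' ctx mc cs ctx')
    (i k h j : Fin n) (v : M' i k) (u : LL k h) (w : NN h j) :
    α' i h j (γ' i k h v u) w = ctx'.φ i k j v (α' k h j u w) := by
  by_cases hi : i = t
  exacts [hα'.map_smul_left_of_eq hγ' hcomp hi .., hα'.map_smul_left_of_ne hγ' hcomp hi ..]

theorem RowColLigation.map_smul_right_of_eq
    (hα' : RowColLigation A M t S N L A' M' NN LL ctx mc cs ce re α')
    (hβ' : ColExcRight A M t S N L A' M' NN ctx mc cs ce β')
    (hcomp : IsComposition A M t S N L A' M' ctx mc cs ctx')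
    {i : Fin n} (hi : i = t) (h k j : Fin n) (u : LL i h) (w : NN h k) (v : M' k j) :
    ctx'.φ i k j (α' i h k u w) v = α' i h j u (β' h k j w v) := by
  subst i
  induction u using (re.lp_tensor h).induction_on with
  | add a b ha hb => simp only [hα'.add_left, ctx'.φ_add_left, ha, hb]
  | tmul l m =>
    by_cases hk : k = t
    · subst k
      induction w using (ce.π_tensor h).induction_on with
      | add a b ha hb => simp only [hβ'.add_left, hα'.add_right, ctx'.φ_add_left, ha, hb]
      | tmul m₂ nn =>
        by_cases hj : j = t
        · subst j
          obtain ⟨s, rfl⟩ := cs.uS.surjective v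
          simp only [hβ'.spec₄, hα'.spec₄, hcomp.phi_ttt, mc.theta_right]
        · induction v using (cs.tmulL_tensor j hj).induction_on with
          | add a b ha hb => simp only [hβ'.add_right, hα'.add_right, ctx'.φ_add_right, ha, hb]
          | tmul l₂ m₃ =>
            simp only [hβ'.spec₃, hα'.spec₃, hα'.spec₄, hcomp.phi_ttj]
            exact (ctx.tensorL_zeta_eq_theta mc h j (cs.tmulL j hj)
              (cs.tmulL_tensor j hj).balanced.2.2 m m₂ m₃ nn l l₂).symm
    · obtain ⟨y, rfl⟩ := (ce.en h k hk).surjective w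
      by_cases hj : j = t
      · subst j
        induction v using (cs.tmulN_tensor k hk).induction_on with
        | add a b ha hb => simp only [hβ'.add_right, hα'.add_right, ctx'.φ_add_right, ha, hb]
        | tmul m₂ nn =>
          simp only [hβ'.spec₂, hα'.spec₄, hα'.spec₃, hcomp.phi_tkt, ctx.φ_assoc]
      · obtain ⟨z, rfl⟩ := (cs.ee k j hk hj).surjective v
        simp only [hβ'.spec₁, hα'.spec₃, hcomp.phi_tkj, ctx.φ_assoc]

theorem RowColLigation.map_smul_right_of_ne
    (hα' : RowColLigation A M t S N L A' M' NN LL ctx mc cs ce re α')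
    (hβ' : ColExcRight A M t S N L A' M' NN ctx mc cs ce β')
    (hcomp : IsComposition A M t S N L A' M' ctx mc cs ctx')
    {i : Fin n} (hi : i ≠ t) (h k j : Fin n) (u : LL i h) (w : NN h k) (v : M' k j) :
    ctx'.φ i k j (α' i h k u w) v = α' i h j u (β' h k j w v) := by
  obtain ⟨x, rfl⟩ := (re.el i h hi).surjective u
  by_cases hk : k = t
  · subst k
    induction w using (ce.π_tensor h).induction_on with
    | add a b ha hb => simp only [hβ'.add_left, hα'.add_right, ctx'.φ_add_left, ha, hb]
    | tmul m nn =>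
      by_cases hj : j = t
      · subst j
        obtain ⟨s, rfl⟩ := cs.uS.surjective v
        simp only [hβ'.spec₄, hα'.spec₂, hcomp.phi_itt]
      · induction v using (cs.tmulL_tensor j hj).induction_on with
        | add a b ha hb => simp only [hβ'.add_right, hα'.add_right, ctx'.φ_add_right, ha, hb]
        | tmul l₂ m₂ => simp only [hβ'.spec₃, hα'.spec₁, hα'.spec₂, hcomp.phi_itj,
            ← ctx.φ_smul_right, ctx.φ_assoc]
  · obtain ⟨y, rfl⟩ := (ce.en h k hk).surjective w
    by_cases hj : j = t
    · subst j
      induction v using (cs.tmulN_tensor k hk).induction_on with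
      | add a b ha hb => simp only [hβ'.add_right, hα'.add_right, ctx'.φ_add_right, ha, hb]
      | tmul m nn =>
        simp only [hβ'.spec₂, hα'.spec₂, hα'.spec₁, hcomp.phi_ikt, ctx.φ_assoc]
    · obtain ⟨z, rfl⟩ := (cs.ee k j hk hj).surjective v
      simp only [hβ'.spec₁, hα'.spec₁, hcomp.phi_ikj, ctx.φ_assoc]

theorem RowColLigation.map_smul_right
    (hα' : RowColLigation A M t S N L A' M' NN LL ctx mc cs ce re α')
    (hβ' : ColExcRight A M t S N L A' M' NN ctx mc cs ce β')
    (hcomp : IsComposition A M t S N L A' M' ctx mc cs ctx')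
    (i h k j : Fin n) (u : LL i h) (w : NN h k) (v : M' k j) :
    ctx'.φ i k j (α' i h k u w) v = α' i h j u (β' h k j w v) := by
  by_cases hi : i = t
  exacts [hα'.map_smul_right_of_eq hβ' hcomp hi .., hα'.map_smul_right_of_ne hβ' hcomp hi ..]

end Ligation

theorem stmt12_general {n : ℕ} {A : Fin n → Type u} {M : Fin n → Fin n → Type u}
    [∀ i, Ring (A i)] [∀ i j, AddCommGroup (M i j)]
    [∀ i j, Module (A i) (M i j)] [∀ i j, Module ((A j)ᵐᵒᵖ) (M i j)]
    [∀ i j, SMulCommClass (A i) ((A j)ᵐᵒᵖ) (M i j)]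
    (ctx : GenMoritaCtx n A M) (t : Fin n)
    (S N L : Type u) [Ring S] [AddCommGroup N] [AddCommGroup L]
    [Module (A t) N] [Module Sᵐᵒᵖ N] [SMulCommClass (A t) Sᵐᵒᵖ N]
    [Module S L] [Module ((A t)ᵐᵒᵖ) L] [SMulCommClass S ((A t)ᵐᵒᵖ) L]
    (mc : MoritaCtx (A t) S N L)
    (A' : Fin n → Type u) (M' : Fin n → Fin n → Type u)
    [∀ i, Ring (A' i)] [∀ i j, AddCommGroup (M' i j)]
    [∀ i j, Module (A' i) (M' i j)] [∀ i j, Module ((A' j)ᵐᵒᵖ) (M' i j)]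
    [∀ i j, SMulCommClass (A' i) ((A' j)ᵐᵒᵖ) (M' i j)]
    (cs : CompSetup A M t S N L A' M')
    (ctx' : GenMoritaCtx n A' M')
    (hcomp : IsComposition A M t S N L A' M' ctx mc cs ctx')
    (Λ : Type u) [Ring Λ] (εΛ : Λ → ∀ i j, M i j) (hΛ : IsMatrixRing ctx Λ εΛ)
    (Λ' : Type u) [Ring Λ'] (εΛ' : Λ' → ∀ i j, M' i j) (hΛ' : IsMatrixRing ctx' Λ' εΛ')
    (NN : Fin n → Fin n → Type u) [∀ i j, AddCommGroup (NN i j)]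
    (ce : ColExc A M t N NN)
    (LL : Fin n → Fin n → Type u) [∀ i j, AddCommGroup (LL i j)]
    (re : RowExc A M t L LL)
    -- the [A_i; M_ij]–[A'_i; M'_ij]-bimodule structure on the column-excision N_m
    [Module Λ (∀ i j, NN i j)] [Module Λ'ᵐᵒᵖ (∀ i j, NN i j)]
    (β : ∀ i k j, M i k → NN k j → NN i j)
    (hβ : ColExcLeft A M t N NN ctx ce β)
    (β' : ∀ i k j, NN i k → M' k j → NN i j)
    (hβ' : ColExcRight A M t S N L A' M' NN ctx mc cs ce β')
    (hNsmulL : ∀ (c : Λ) (x : ∀ i j, NN i j) (i j : Fin n),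
      (c • x) i j = ∑ k, β i k j (εΛ c i k) (x k j))
    (hNsmulR : ∀ (c' : Λ') (x : ∀ i j, NN i j) (i j : Fin n),
      (op c' • x) i j = ∑ k, β' i k j (x i k) (εΛ' c' k j))
    -- the [A'_i; M'_ij]–[A_i; M_ij]-bimodule structure on the row-excision L_m
    [Module Λ' (∀ i j, LL i j)] [Module Λᵐᵒᵖ (∀ i j, LL i j)]
    (γ' : ∀ i k j, M' i k → LL k j → LL i j)
    (hγ' : RowExcLeft A M t S N L A' M' LL ctx mc cs re γ')
    (γ : ∀ i k j, LL i k → M k j → LL i j)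
    (hγ : RowExcRight A M t L LL ctx re γ)
    (hLsmulL : ∀ (c' : Λ') (y : ∀ i j, LL i j) (i j : Fin n),
      (c' • y) i j = ∑ k, γ' i k j (εΛ' c' i k) (y k j))
    (hLsmulR : ∀ (c : Λ) (y : ∀ i j, LL i j) (i j : Fin n),
      (op c • y) i j = ∑ k, γ i k j (y i k) (εΛ c k j))
    -- the column-row ligation and the map |α| it induces into Λ = [A_i; M_ij]
    (α : ∀ i k j, NN i k → LL k j → M i j)
    (hα : ColRowLigation A M t S N L NN LL ctx mc ce re α)
    (Abar : (∀ i j, NN i j) → (∀ i j, LL i j) → Λ)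
    (hAbar : ∀ x y, εΛ (Abar x y) = fun i j => ∑ k, α i k j (x i k) (y k j))
    -- the row-column ligation and the map |α'| it induces into Λ' = [A'_i; M'_ij]
    (α' : ∀ i k j, LL i k → NN k j → M' i j)
    (hα' : RowColLigation A M t S N L A' M' NN LL ctx mc cs ce re α')
    (Abar' : (∀ i j, LL i j) → (∀ i j, NN i j) → Λ')
    (hAbar' : ∀ y x, εΛ' (Abar' y x) = fun i j => ∑ k, α' i k j (y i k) (x k j)) :
    (∀ (x : ∀ i j, NN i j) (y : ∀ i j, LL i j) (c' : Λ'),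
      Abar (op c' • x) y = Abar x (c' • y)) ∧
    (∀ (y : ∀ i j, LL i j) (x : ∀ i j, NN i j) (c : Λ),
      Abar' (op c • y) x = Abar' y (c • x)) ∧
    (∀ (c : Λ) (x : ∀ i j, NN i j) (y : ∀ i j, LL i j),
      Abar (c • x) y = c * Abar x y) ∧
    (∀ (x : ∀ i j, NN i j) (y : ∀ i j, LL i j) (c : Λ),
      Abar x (op c • y) = Abar x y * c) ∧
    (∀ (c' : Λ') (y : ∀ i j, LL i j) (x : ∀ i j, NN i j),
      Abar' (c' • y) x = c' * Abar' y x) ∧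
    (∀ (y : ∀ i j, LL i j) (x : ∀ i j, NN i j) (c' : Λ'),
      Abar' y (op c' • x) = Abar' y x * c') ∧
    (∀ (x x' : ∀ i j, NN i j) (y : ∀ i j, LL i j),
      Abar x y • x' = op (Abar' y x') • x) ∧
    (∀ (y y' : ∀ i j, LL i j) (x : ∀ i j, NN i j),
      Abar' y x • y' = op (Abar x y') • y) := by
  have hN_left (c : Λ) (x) : c • x = blockMul β (εΛ c) x := funext₂ (hNsmulL c x)
  have hN_right (c' : Λ') (x) : op c' • x = blockMul β' x (εΛ' c') := funext₂ (hNsmulR c' x)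
  have hL_left (c' : Λ') (y) : c' • y = blockMul γ' (εΛ' c') y := funext₂ (hLsmulL c' y)
  have hL_right (c : Λ) (y) : op c • y = blockMul γ y (εΛ c) := funext₂ (hLsmulR c y)
  have hAbar_eq (x y) : εΛ (Abar x y) = blockMul α x y := hAbar x y
  have hAbar'_eq (y x) : εΛ' (Abar' y x) = blockMul α' y x := hAbar' y x
  have hmul (a b : Λ) : εΛ (a * b) = blockMul ctx.φ (εΛ a) (εΛ b) := hΛ.map_mul a b
  have hmul' (a b : Λ') : εΛ' (a * b) = blockMul ctx'.φ (εΛ' a) (εΛ' b) := hΛ'.map_mul a b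
  refine ⟨fun x y c' => hΛ.bijective.injective ?_, fun y x c => hΛ'.bijective.injective ?_,
    fun c x y => hΛ.bijective.injective ?_, fun x y c => hΛ.bijective.injective ?_,
    fun c' y x => hΛ'.bijective.injective ?_, fun y x c' => hΛ'.bijective.injective ?_,
    fun x x' y => ?_, fun y y' x => ?_⟩
  · rw [hAbar_eq, hAbar_eq, hN_right, hL_left]
    exact blockMul_assoc hα.add_left hα.add_right (hα.balanced hβ' hγ') _ _ _
  · rw [hAbar'_eq, hAbar'_eq, hL_right, hN_left]
    exact blockMul_assoc hα'.add_left hα'.add_right (hα'.balanced hβ hγ) _ _ _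
  · rw [hmul, hAbar_eq, hAbar_eq, hN_left]
    exact blockMul_assoc hα.add_left ctx.φ_add_right (hα.map_smul_left hβ) _ _ _
  · rw [hmul, hAbar_eq, hAbar_eq, hL_right]
    exact (blockMul_assoc ctx.φ_add_left hα.add_right (hα.map_smul_right hγ) _ _ _).symm
  · rw [hmul', hAbar'_eq, hAbar'_eq, hL_left]
    exact blockMul_assoc hα'.add_left ctx'.φ_add_right (hα'.map_smul_left hγ' hcomp) _ _ _
  · rw [hmul', hAbar'_eq, hAbar'_eq, hN_right]
    exact (blockMul_assoc ctx'.φ_add_left hα'.add_right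
      (hα'.map_smul_right hβ' hcomp) _ _ _).symm
  · rw [hN_left, hN_right, hAbar_eq, hAbar'_eq]
    exact blockMul_assoc hβ.add_left hβ'.add_right (ligation_assoc_left hα hα' hβ hβ') _ _ _
  · rw [hL_left, hL_right, hAbar'_eq, hAbar_eq]
    exact blockMul_assoc hγ'.add_left hγ.add_right (ligation_assoc_right hα hα' hγ hγ') _ _ _

/-- Theorem 3.10 of the paper: the tuple
`([A_i; M_ij], [A'_i; M'_ij]; N_m, L_m; |α|, |α'|)` is a Morita context: `N_m` and
`L_m` are bimodules (hypotheses above), `|α|` and `|α'|` are balanced bimodule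
homomorphisms, and the mixed associativity conditions hold. -/
theorem stmt12 {n : ℕ} {A : Fin n → Type u} {M : Fin n → Fin n → Type u}
    [∀ i, Ring (A i)] [∀ i j, AddCommGroup (M i j)]
    [∀ i j, Module (A i) (M i j)] [∀ i j, Module ((A j)ᵐᵒᵖ) (M i j)]
    [∀ i j, SMulCommClass (A i) ((A j)ᵐᵒᵖ) (M i j)]
    (ctx : GenMoritaCtx n A M) (t : Fin n)
    (S N L : Type u) [Ring S] [AddCommGroup N] [AddCommGroup L]
    [Module (A t) N] [Module Sᵐᵒᵖ N] [SMulCommClass (A t) Sᵐᵒᵖ N]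
    [Module S L] [Module ((A t)ᵐᵒᵖ) L] [SMulCommClass S ((A t)ᵐᵒᵖ) L]
    (mc : MoritaCtx (A t) S N L)
    (A' : Fin n → Type u) (M' : Fin n → Fin n → Type u)
    [∀ i, Ring (A' i)] [∀ i j, AddCommGroup (M' i j)]
    [∀ i j, Module (A' i) (M' i j)] [∀ i j, Module ((A' j)ᵐᵒᵖ) (M' i j)]
    [∀ i j, SMulCommClass (A' i) ((A' j)ᵐᵒᵖ) (M' i j)]
    (cs : CompSetup A M t S N L A' M')
    (ctx' : GenMoritaCtx n A' M')
    (hcomp : IsComposition A M t S N L A' M' ctx mc cs ctx')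
    (Λ : Type u) [Ring Λ] (εΛ : Λ → ∀ i j, M i j) (hΛ : IsMatrixRing ctx Λ εΛ)
    (Λ' : Type u) [Ring Λ'] (εΛ' : Λ' → ∀ i j, M' i j) (hΛ' : IsMatrixRing ctx' Λ' εΛ')
    (NN : Fin n → Fin n → Type u) [∀ i j, AddCommGroup (NN i j)]
    (ce : ColExc A M t N NN)
    (LL : Fin n → Fin n → Type u) [∀ i j, AddCommGroup (LL i j)]
    (re : RowExc A M t L LL)
    -- the [A_i; M_ij]–[A'_i; M'_ij]-bimodule structure on the column-excision N_m
    [Module Λ (∀ i j, NN i j)] [Module Λ'ᵐᵒᵖ (∀ i j, NN i j)]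
    [SMulCommClass Λ Λ'ᵐᵒᵖ (∀ i j, NN i j)]
    (β : ∀ i k j, M i k → NN k j → NN i j)
    (hβ : ColExcLeft A M t N NN ctx ce β)
    (β' : ∀ i k j, NN i k → M' k j → NN i j)
    (hβ' : ColExcRight A M t S N L A' M' NN ctx mc cs ce β')
    (hNsmulL : ∀ (c : Λ) (x : ∀ i j, NN i j) (i j : Fin n),
      (c • x) i j = ∑ k, β i k j (εΛ c i k) (x k j))
    (hNsmulR : ∀ (c' : Λ') (x : ∀ i j, NN i j) (i j : Fin n),
      (op c' • x) i j = ∑ k, β' i k j (x i k) (εΛ' c' k j))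
    -- the [A'_i; M'_ij]–[A_i; M_ij]-bimodule structure on the row-excision L_m
    [Module Λ' (∀ i j, LL i j)] [Module Λᵐᵒᵖ (∀ i j, LL i j)]
    [SMulCommClass Λ' Λᵐᵒᵖ (∀ i j, LL i j)]
    (γ' : ∀ i k j, M' i k → LL k j → LL i j)
    (hγ' : RowExcLeft A M t S N L A' M' LL ctx mc cs re γ')
    (γ : ∀ i k j, LL i k → M k j → LL i j)
    (hγ : RowExcRight A M t L LL ctx re γ)
    (hLsmulL : ∀ (c' : Λ') (y : ∀ i j, LL i j) (i j : Fin n),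
      (c' • y) i j = ∑ k, γ' i k j (εΛ' c' i k) (y k j))
    (hLsmulR : ∀ (c : Λ) (y : ∀ i j, LL i j) (i j : Fin n),
      (op c • y) i j = ∑ k, γ i k j (y i k) (εΛ c k j))
    -- the column-row ligation and the map |α| it induces into Λ = [A_i; M_ij]
    (α : ∀ i k j, NN i k → LL k j → M i j)
    (hα : ColRowLigation A M t S N L NN LL ctx mc ce re α)
    (Abar : (∀ i j, NN i j) → (∀ i j, LL i j) → Λ)
    (hAbar : ∀ x y, εΛ (Abar x y) = fun i j => ∑ k, α i k j (x i k) (y k j))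
    -- the row-column ligation and the map |α'| it induces into Λ' = [A'_i; M'_ij]
    (α' : ∀ i k j, LL i k → NN k j → M' i j)
    (hα' : RowColLigation A M t S N L A' M' NN LL ctx mc cs ce re α')
    (Abar' : (∀ i j, LL i j) → (∀ i j, NN i j) → Λ')
    (hAbar' : ∀ y x, εΛ' (Abar' y x) = fun i j => ∑ k, α' i k j (y i k) (x k j)) :
    (∀ (x : ∀ i j, NN i j) (y : ∀ i j, LL i j) (c' : Λ'),
      Abar (op c' • x) y = Abar x (c' • y)) ∧
    (∀ (y : ∀ i j, LL i j) (x : ∀ i j, NN i j) (c : Λ),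
      Abar' (op c • y) x = Abar' y (c • x)) ∧
    (∀ (c : Λ) (x : ∀ i j, NN i j) (y : ∀ i j, LL i j),
      Abar (c • x) y = c * Abar x y) ∧
    (∀ (x : ∀ i j, NN i j) (y : ∀ i j, LL i j) (c : Λ),
      Abar x (op c • y) = Abar x y * c) ∧
    (∀ (c' : Λ') (y : ∀ i j, LL i j) (x : ∀ i j, NN i j),
      Abar' (c' • y) x = c' * Abar' y x) ∧
    (∀ (y : ∀ i j, LL i j) (x : ∀ i j, NN i j) (c' : Λ'),
      Abar' y (op c' • x) = Abar' y x * c') ∧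
    (∀ (x x' : ∀ i j, NN i j) (y : ∀ i j, LL i j),
      Abar x y • x' = op (Abar' y x') • x) ∧
    (∀ (y y' : ∀ i j, LL i j) (x : ∀ i j, NN i j),
      Abar' y x • y' = op (Abar x y') • y) :=
  stmt12_general ctx t S N L mc A' M' cs ctx' hcomp Λ εΛ hΛ Λ' εΛ' hΛ' NN ce LL re β hβ β' hβ'
    hNsmulL hNsmulR γ' hγ' γ hγ hLsmulL hLsmulR α hα Abar hAbar α' hα' Abar' hAbar'
end

section
/- Let (A_i; M_ij; φ_ikj) be a generalised Morita context of size n with unital rings and with A_t = R for a fixed index t, let (R, S; N, L; ζ, θ) be a Morita context with ζ and θ surjective, and let (A′_i; M′_ij; φ′_ikj) be their composition. Then the generalised matrix rings [A_i; M_ij] and [A′_i; M′_ij] are Morita equivalent: the functors N_m ⊗_{[A′_i; M′_ij]} − and L_m ⊗_{[A_i; M_ij]} − are mutually quasi-inverse equivalences between the categories of left [A′_i; M′_ij]-modules and left [A_i; M_ij]-modules. -/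
universe u

open MulOpposite

variable {n : ℕ} {A : Fin n → Type u} {M : Fin n → Fin n → Type u}
    [∀ i, Ring (A i)] [∀ i j, AddCommGroup (M i j)]
    [∀ i j, Module (A i) (M i j)] [∀ i j, Module ((A j)ᵐᵒᵖ) (M i j)]
    [∀ i j, SMulCommClass (A i) ((A j)ᵐᵒᵖ) (M i j)]

section Helpers

variable {T Z : Type u} [AddCommGroup T] [AddCommGroup Z]

lemma addhom_zero {f : T → Z} (hf : ∀ a b, f (a + b) = f a + f b) : f 0 = 0 :=
  (AddMonoidHom.mk' f hf).map_zero

lemma addhom_sum {f : T → Z} (hf : ∀ a b, f (a + b) = f a + f b)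
    {ι : Type*} (s : Finset ι) (g : ι → T) :
    f (∑ k ∈ s, g k) = ∑ k ∈ s, f (g k) := map_sum (AddMonoidHom.mk' f hf) g s

lemma IsBTensor.gen {A : Type u} [Ring A] {Mm X : Type u} [AddCommGroup Mm] [AddCommGroup X]
    {ra : Mm → A → Mm} {la : A → X → X} {τ : Mm → X → T}
    (ht : IsBTensor A ra la T τ) :
    AddSubgroup.closure {z : T | ∃ m x, z = τ m x} = ⊤ := by
  set C : AddSubgroup T := AddSubgroup.closure {z : T | ∃ m x, z = τ m x} with hC
  have hbal : IsBalancedMap A ra la (fun (_ : Mm) (_ : X) => (0 : T ⧸ C)) := by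
    refine ⟨?_, ?_, ?_⟩ <;> intros <;> simp
  obtain ⟨h, -, huniq⟩ := ht.lift (T ⧸ C) _ hbal
  have h1 : (QuotientAddGroup.mk' C) = h := huniq _ (fun m x => by
    have hmem : τ m x ∈ {z : T | ∃ m x, z = τ m x} := ⟨m, x, rfl⟩
    have : τ m x ∈ C := hC ▸ AddSubgroup.subset_closure hmem
    simpa [QuotientAddGroup.eq_zero_iff] using this)
  have h2 : (0 : T →+ T ⧸ C) = h := huniq _ (fun m x => rfl)
  ext x
  simp only [AddSubgroup.mem_top, iff_true]
  have h3 := congrArg (fun (f : T →+ T ⧸ C) => f x) (h1.trans h2.symm)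
  simpa [QuotientAddGroup.eq_zero_iff] using h3

lemma ext_gen {A : Type u} [Ring A] {Mm X : Type u} [AddCommGroup Mm] [AddCommGroup X]
    {ra : Mm → A → Mm} {la : A → X → X} {τ : Mm → X → T}
    (ht : IsBTensor A ra la T τ) {f g : T → Z}
    (hf : ∀ a b, f (a + b) = f a + f b) (hg : ∀ a b, g (a + b) = g a + g b)
    (h : ∀ m x, f (τ m x) = g (τ m x)) (u : T) : f u = g u := by
  have he := AddMonoidHom.eqOn_closure (f := AddMonoidHom.mk' f hf) (g := AddMonoidHom.mk' g hg)
    (s := {z : T | ∃ m x, z = τ m x}) (by rintro z ⟨m, x, rfl⟩; exact h m x)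
  have hu : u ∈ AddSubgroup.closure {z : T | ∃ m x, z = τ m x} := by rw [ht.gen]; trivial
  exact he hu

lemma gen_rep {G P Q : Type u} [AddCommGroup G] (f : P → Q → G)
    (hneg : ∀ p q, ∃ p', f p' q = - f p q)
    (hS : AddSubgroup.closure {z : G | ∃ p q, z = f p q} = ⊤) (g : G) :
    ∃ s : Multiset (P × Q), (s.map fun pq => f pq.1 pq.2).sum = g := by
  have hg : g ∈ AddSubgroup.closure {z : G | ∃ p q, z = f p q} := by rw [hS]; trivial
  induction hg using AddSubgroup.closure_induction with
  | mem x hx =>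
    obtain ⟨p, q, rfl⟩ := hx
    exact ⟨{(p, q)}, by simp⟩
  | zero => exact ⟨0, by simp⟩
  | add x y _ _ hx hy =>
    obtain ⟨s₁, hs₁⟩ := hx
    obtain ⟨s₂, hs₂⟩ := hy
    exact ⟨s₁ + s₂, by simp [hs₁, hs₂]⟩
  | neg x _ hx =>
    obtain ⟨s, hs⟩ := hx
    refine ⟨s.map fun pq => (Classical.choose (hneg pq.1 pq.2), pq.2), ?_⟩
    rw [Multiset.map_map]
    have h2 : (s.map ((fun pq : P × Q => f pq.1 pq.2) ∘
        fun pq : P × Q => (Classical.choose (hneg pq.1 pq.2), pq.2)))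
        = s.map fun pq : P × Q => - f pq.1 pq.2 :=
      Multiset.map_congr rfl fun pq _ => Classical.choose_spec (hneg pq.1 pq.2)
    rw [h2, Multiset.sum_map_neg, hs]

end Helpers
section Work

variable {n : ℕ} {A : Fin n → Type u} {M : Fin n → Fin n → Type u}
    [∀ i, Ring (A i)] [∀ i j, AddCommGroup (M i j)]
    [∀ i j, Module (A i) (M i j)] [∀ i j, Module ((A j)ᵐᵒᵖ) (M i j)]
    [∀ i j, SMulCommClass (A i) ((A j)ᵐᵒᵖ) (M i j)]
    {t : Fin n} {S N L : Type u} [Ring S] [AddCommGroup N] [AddCommGroup L]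
    [Module (A t) N] [Module Sᵐᵒᵖ N] [SMulCommClass (A t) Sᵐᵒᵖ N]
    [Module S L] [Module ((A t)ᵐᵒᵖ) L] [SMulCommClass S ((A t)ᵐᵒᵖ) L]
    {A' : Fin n → Type u} {M' : Fin n → Fin n → Type u}
    [∀ i, Ring (A' i)] [∀ i j, AddCommGroup (M' i j)]
    [∀ i j, Module (A' i) (M' i j)] [∀ i j, Module ((A' j)ᵐᵒᵖ) (M' i j)]
    [∀ i j, SMulCommClass (A' i) ((A' j)ᵐᵒᵖ) (M' i j)]
    {NN : Fin n → Fin n → Type u} [∀ i j, AddCommGroup (NN i j)]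
    {LL : Fin n → Fin n → Type u} [∀ i j, AddCommGroup (LL i j)]
    {ctx : GenMoritaCtx n A M} {mc : MoritaCtx (A t) S N L}
    {cs : CompSetup A M t S N L A' M'} {ctx' : GenMoritaCtx n A' M'}
    {ce : ColExc A M t N NN} {re : RowExc A M t L LL}
    {β : ∀ i k j, M i k → NN k j → NN i j}
    {β' : ∀ i k j, NN i k → M' k j → NN i j}
    {γ' : ∀ i k j, M' i k → LL k j → LL i j}
    {γ : ∀ i k j, LL i k → M k j → LL i j}
    {α : ∀ i k j, NN i k → LL k j → M i j}


lemma pi_bal (i : Fin n) (a : A t) (m : M i t) (x : N) :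
    ce.π i (op a • m) x = ce.π i m (a • x) := (ce.π_tensor i).balanced.2.2 a m x

lemma lp_bal (j : Fin n) (a : A t) (l : L) (m : M t j) :
    re.lp j (op a • l) m = re.lp j l (a • m) := (re.lp_tensor j).balanced.2.2 a l m

lemma tmulN_bal (i : Fin n) (hi : i ≠ t) (a : A t) (m : M i t) (x : N) :
    cs.tmulN i hi (op a • m) x = cs.tmulN i hi m (a • x) := (cs.tmulN_tensor i hi).balanced.2.2 a m x

lemma tmulL_bal (j : Fin n) (hj : j ≠ t) (a : A t) (l : L) (m : M t j) :
    cs.tmulL j hj (op a • l) m = cs.tmulL j hj l (a • m) := (cs.tmulL_tensor j hj).balanced.2.2 a l m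

lemma P6 (hα : ColRowLigation A M t S N L NN LL ctx mc ce re α)
    (hγ : RowExcRight A M t L LL ctx re γ)
    (i k j h : Fin n) (m : M h j) (x : NN i k) (y : LL k h) :
    α i k j x (γ k h j y m) = ctx.φ i h j (α i k h x y) m := by
  by_cases hk : t = k
  · subst hk
    refine ext_gen (ce.π_tensor i)
      (f := fun x => α i t j x (γ t h j y m))
      (g := fun x => ctx.φ i h j (α i t h x y) m)
      (fun a b => by simp only [hα.add_left]) (fun a b => by simp only [hα.add_left, ctx.φ_add_left]) ?_ x
    intro mX nn
    beta_reduce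
    refine ext_gen (re.lp_tensor h)
      (f := fun y => α i t j (ce.π i mX nn) (γ t h j y m))
      (g := fun y => ctx.φ i h j (α i t h (ce.π i mX nn) y) m)
      (fun a b => by simp only [hγ.add_left, hα.add_right])
      (fun a b => by simp only [hα.add_right, ctx.φ_add_left]) ?_ y
    intro l mY
    beta_reduce
    rw [hγ.spec_t, hα.spec_t, hα.spec_t, ctx.φ_assoc]
  · have hk' : k ≠ t := fun h => hk h.symm
    obtain ⟨X, rfl⟩ := (ce.en i k hk').surjective x
    obtain ⟨Y, rfl⟩ := (re.el k h hk').surjective y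
    rw [hγ.spec_ne _ _ _ hk', hα.spec_ne _ _ _ hk', hα.spec_ne _ _ _ hk', ctx.φ_assoc]

lemma P8 (hα : ColRowLigation A M t S N L NN LL ctx mc ce re α)
    (hβ : ColExcLeft A M t N NN ctx ce β)
    (i k j h : Fin n) (z : M i h) (x : NN h k) (y : LL k j) :
    α i k j (β i h k z x) y = ctx.φ i h j z (α h k j x y) := by
  by_cases hk : t = k
  · subst hk
    refine ext_gen (ce.π_tensor h)
      (f := fun x => α i t j (β i h t z x) y)
      (g := fun x => ctx.φ i h j z (α h t j x y))
      (fun a b => by simp only [hβ.add_right, hα.add_left])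
      (fun a b => by simp only [hα.add_left, ctx.φ_add_right]) ?_ x
    intro mX nn
    beta_reduce
    refine ext_gen (re.lp_tensor j)
      (f := fun y => α i t j (β i h t z (ce.π h mX nn)) y)
      (g := fun y => ctx.φ i h j z (α h t j (ce.π h mX nn) y))
      (fun a b => by simp only [hα.add_right])
      (fun a b => by simp only [hα.add_right, ctx.φ_add_right]) ?_ y
    intro l m'
    beta_reduce
    rw [hβ.spec_t, hα.spec_t, hα.spec_t, ← ctx.φ_smul_right, ← ctx.φ_assoc]
  · have hk' : k ≠ t := fun h => hk h.symm
    obtain ⟨X, rfl⟩ := (ce.en h k hk').surjective x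
    obtain ⟨Y, rfl⟩ := (re.el k j hk').surjective y
    rw [hβ.spec_ne _ _ _ hk', hα.spec_ne _ _ _ hk', hα.spec_ne _ _ _ hk', ctx.φ_assoc]

lemma P1 (hβ : ColExcLeft A M t N NN ctx ce β)
    (hγ : RowExcRight A M t L LL ctx re γ)
    (hα' : RowColLigation A M t S N L A' M' NN LL ctx mc cs ce re α')
    (i h k j : Fin n) (m : M h k) (y : LL i h) (x : NN k j) :
    α' i k j (γ i h k y m) x = α' i h j y (β h k j m x) := by
  by_cases hi : t = i
  · subst hi
    refine ext_gen (re.lp_tensor h)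
      (f := fun y => α' t k j (γ t h k y m) x)
      (g := fun y => α' t h j y (β h k j m x))
      (fun a b => by simp only [hγ.add_left, hα'.add_left])
      (fun a b => by simp only [hα'.add_left]) ?_ y
    intro l m₀
    beta_reduce
    rw [hγ.spec_t]
    by_cases hj : t = j
    · subst hj
      refine ext_gen (ce.π_tensor k)
        (f := fun x => α' t k t (re.lp k l (ctx.φ t h k m₀ m)) x)
        (g := fun x => α' t h t (re.lp h l m₀) (β h k t m x))
        (fun a b => by simp only [hα'.add_right])
        (fun a b => by simp only [hβ.add_right, hα'.add_right]) ?_ x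
      intro m' nn
      beta_reduce
      rw [hβ.spec_t, hα'.spec₄, hα'.spec₄, ctx.φ_assoc]
    · have hj' : j ≠ t := fun hh => hj hh.symm
      obtain ⟨X0, rfl⟩ := (ce.en k j hj').surjective x
      rw [hβ.spec_ne _ _ _ hj', hα'.spec₃ _ _ hj', hα'.spec₃ _ _ hj', ctx.φ_assoc]
  · have hi' : i ≠ t := fun hh => hi hh.symm
    obtain ⟨Y, rfl⟩ := (re.el i h hi').surjective y
    rw [hγ.spec_ne _ _ _ hi']
    by_cases hj : t = j
    · subst hj
      refine ext_gen (ce.π_tensor k)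
        (f := fun x => α' i k t (re.el i k hi' (ctx.φ i h k Y m)) x)
        (g := fun x => α' i h t (re.el i h hi' Y) (β h k t m x))
        (fun a b => by simp only [hα'.add_right])
        (fun a b => by simp only [hβ.add_right, hα'.add_right]) ?_ x
      intro m' nn
      beta_reduce
      rw [hβ.spec_t, hα'.spec₂ _ _ hi', hα'.spec₂ _ _ hi', ctx.φ_assoc]
    · have hj' : j ≠ t := fun hh => hj hh.symm
      obtain ⟨X0, rfl⟩ := (ce.en k j hj').surjective x
      rw [hβ.spec_ne _ _ _ hj', hα'.spec₁ _ _ _ hi' hj', hα'.spec₁ _ _ _ hi' hj', ctx.φ_assoc]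

lemma P7 (hα : ColRowLigation A M t S N L NN LL ctx mc ce re α)
    (hβ' : ColExcRight A M t S N L A' M' NN ctx mc cs ce β')
    (hγ' : RowExcLeft A M t S N L A' M' LL ctx mc cs re γ')
    (i h k j : Fin n) (x : NN i h) (z' : M' h k) (y : LL k j) :
    α i k j (β' i h k x z') y = α i h j x (γ' h k j z' y) := by
  by_cases hh : t = h
  · subst hh
    by_cases hk : t = k
    · subst hk
      obtain ⟨s, rfl⟩ := cs.uS.surjective z'
      refine ext_gen (ce.π_tensor i)
        (f := fun x => α i t j (β' i t t x (cs.uS s)) y)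
        (g := fun x => α i t j x (γ' t t j (cs.uS s) y))
        (fun a b => by simp only [hβ'.add_left, hα.add_left])
        (fun a b => by simp only [hα.add_left]) ?_ x
      intro mX nn
      beta_reduce
      refine ext_gen (re.lp_tensor j)
        (f := fun y => α i t j (β' i t t (ce.π i mX nn) (cs.uS s)) y)
        (g := fun y => α i t j (ce.π i mX nn) (γ' t t j (cs.uS s) y))
        (fun a b => by simp only [hα.add_right])
        (fun a b => by simp only [hγ'.add_right, hα.add_right]) ?_ y
      intro l m'
      beta_reduce
      rw [hβ'.spec₄, hγ'.spec₄, hα.spec_t, hα.spec_t, mc.zeta_balanced]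
    · have hk' : k ≠ t := fun h2 => hk h2.symm
      obtain ⟨Y, rfl⟩ := (re.el k j hk').surjective y
      refine ext_gen (ce.π_tensor i)
        (f := fun x => α i k j (β' i t k x z') (re.el k j hk' Y))
        (g := fun x => α i t j x (γ' t k j z' (re.el k j hk' Y)))
        (fun a b => by simp only [hβ'.add_left, hα.add_left])
        (fun a b => by simp only [hα.add_left]) ?_ x
      intro mX nn
      beta_reduce
      refine ext_gen (cs.tmulL_tensor k hk')
        (f := fun z' => α i k j (β' i t k (ce.π i mX nn) z') (re.el k j hk' Y))
        (g := fun z' => α i t j (ce.π i mX nn) (γ' t k j z' (re.el k j hk' Y)))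
        (fun a b => by simp only [hβ'.add_right, hα.add_left])
        (fun a b => by simp only [hγ'.add_left, hα.add_right]) ?_ z'
      intro l mZ
      beta_reduce
      rw [hβ'.spec₃ _ _ hk', hγ'.spec₂ _ _ hk', hα.spec_ne _ _ _ hk', hα.spec_t, ctx.φ_assoc]
  · have hh' : h ≠ t := fun h2 => hh h2.symm
    obtain ⟨X, rfl⟩ := (ce.en i h hh').surjective x
    by_cases hk : t = k
    · subst hk
      refine ext_gen (cs.tmulN_tensor h hh')
        (f := fun z' => α i t j (β' i h t (ce.en i h hh' X) z') y)
        (g := fun z' => α i h j (ce.en i h hh' X) (γ' h t j z' y))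
        (fun a b => by simp only [hβ'.add_right, hα.add_left])
        (fun a b => by simp only [hγ'.add_left, hα.add_right]) ?_ z'
      intro mZ nn
      beta_reduce
      refine ext_gen (re.lp_tensor j)
        (f := fun y => α i t j (β' i h t (ce.en i h hh' X) (cs.tmulN h hh' mZ nn)) y)
        (g := fun y => α i h j (ce.en i h hh' X) (γ' h t j (cs.tmulN h hh' mZ nn) y))
        (fun a b => by simp only [hα.add_right])
        (fun a b => by simp only [hγ'.add_right, hα.add_right]) ?_ y
      intro l m'
      beta_reduce
      rw [hβ'.spec₂ _ _ hh', hγ'.spec₃ _ _ hh', hα.spec_t, hα.spec_ne _ _ _ hh',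
        ← ctx.φ_smul_right, ← ctx.φ_assoc]
    · have hk' : k ≠ t := fun h2 => hk h2.symm
      obtain ⟨Z, rfl⟩ := (cs.ee h k hh' hk').surjective z'
      obtain ⟨Y, rfl⟩ := (re.el k j hk').surjective y
      rw [hβ'.spec₁ _ _ _ hh' hk', hγ'.spec₁ _ _ _ hh' hk', hα.spec_ne _ _ _ hk',
        hα.spec_ne _ _ _ hh', ctx.φ_assoc]

lemma P4 (hβ : ColExcLeft A M t N NN ctx ce β)
    (hβ' : ColExcRight A M t S N L A' M' NN ctx mc cs ce β')
    (hα : ColRowLigation A M t S N L NN LL ctx mc ce re α)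
    (hα' : RowColLigation A M t S N L A' M' NN LL ctx mc cs ce re α')
    (i k h j : Fin n) (x₀ : NN i k) (y₀ : LL k h) (x₁ : NN h j) :
    β' i k j x₀ (α' k h j y₀ x₁) = β i h j (α i k h x₀ y₀) x₁ := by
  by_cases hk : t = k
  · subst hk
    by_cases hj : t = j
    · subst hj
      refine ext_gen (ce.π_tensor i)
        (f := fun x₀ => β' i t t x₀ (α' t h t y₀ x₁))
        (g := fun x₀ => β i h t (α i t h x₀ y₀) x₁)
        (fun a b => by simp only [hβ'.add_left])
        (fun a b => by simp only [hα.add_left, hβ.add_left]) ?_ x₀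
      intro m nn
      beta_reduce
      refine ext_gen (re.lp_tensor h)
        (f := fun y₀ => β' i t t (ce.π i m nn) (α' t h t y₀ x₁))
        (g := fun y₀ => β i h t (α i t h (ce.π i m nn) y₀) x₁)
        (fun a b => by simp only [hα'.add_left, hβ'.add_right])
        (fun a b => by simp only [hα.add_right, hβ.add_left]) ?_ y₀
      intro l mm
      beta_reduce
      refine ext_gen (ce.π_tensor h)
        (f := fun x₁ => β' i t t (ce.π i m nn) (α' t h t (re.lp h l mm) x₁))
        (g := fun x₁ => β i h t (α i t h (ce.π i m nn) (re.lp h l mm)) x₁)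
        (fun a b => by simp only [hα'.add_right, hβ'.add_right])
        (fun a b => by simp only [hβ.add_right]) ?_ x₁
      intro m₂ nn₂
      beta_reduce
      rw [hα'.spec₄, hβ'.spec₄, hα.spec_t, hβ.spec_t]
      conv_rhs => rw [← ctx.φ_assoc,
        show ctx.φ t h t mm m₂ = ctx.δ t ((ctx.δ t).symm (ctx.φ t h t mm m₂)) from
          ((ctx.δ t).apply_symm_apply _).symm,
        ctx.φ_diag_right, pi_bal, pi_bal,
        mc.assoc_left, ← mc.theta_balanced]
    · have hj' : j ≠ t := fun h2 => hj h2.symm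
      obtain ⟨W, rfl⟩ := (ce.en h j hj').surjective x₁
      refine ext_gen (ce.π_tensor i)
        (f := fun x₀ => β' i t j x₀ (α' t h j y₀ (ce.en h j hj' W)))
        (g := fun x₀ => β i h j (α i t h x₀ y₀) (ce.en h j hj' W))
        (fun a b => by simp only [hβ'.add_left])
        (fun a b => by simp only [hα.add_left, hβ.add_left]) ?_ x₀
      intro m nn
      beta_reduce
      refine ext_gen (re.lp_tensor h)
        (f := fun y₀ => β' i t j (ce.π i m nn) (α' t h j y₀ (ce.en h j hj' W)))
        (g := fun y₀ => β i h j (α i t h (ce.π i m nn) y₀) (ce.en h j hj' W))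
        (fun a b => by simp only [hα'.add_left, hβ'.add_right])
        (fun a b => by simp only [hα.add_right, hβ.add_left]) ?_ y₀
      intro l mm
      beta_reduce
      rw [hα'.spec₃ _ _ hj', hβ'.spec₃ _ _ hj', hα.spec_t, hβ.spec_ne _ _ _ hj', ctx.φ_assoc]
  · have hk' : k ≠ t := fun h2 => hk h2.symm
    obtain ⟨X, rfl⟩ := (ce.en i k hk').surjective x₀
    obtain ⟨Y, rfl⟩ := (re.el k h hk').surjective y₀
    by_cases hj : t = j
    · subst hj
      refine ext_gen (ce.π_tensor h)
        (f := fun x₁ => β' i k t (ce.en i k hk' X) (α' k h t (re.el k h hk' Y) x₁))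
        (g := fun x₁ => β i h t (α i k h (ce.en i k hk' X) (re.el k h hk' Y)) x₁)
        (fun a b => by simp only [hα'.add_right, hβ'.add_right])
        (fun a b => by simp only [hβ.add_right]) ?_ x₁
      intro m nn
      beta_reduce
      rw [hα'.spec₂ _ _ hk', hβ'.spec₂ _ _ hk', hα.spec_ne _ _ _ hk', hβ.spec_t, ctx.φ_assoc]
    · have hj' : j ≠ t := fun h2 => hj h2.symm
      obtain ⟨W, rfl⟩ := (ce.en h j hj').surjective x₁
      rw [hα'.spec₁ _ _ _ hk' hj', hβ'.spec₁ _ _ _ hk' hj', hα.spec_ne _ _ _ hk',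
        hβ.spec_ne _ _ _ hj', ctx.φ_assoc]

lemma P5 (hγ : RowExcRight A M t L LL ctx re γ)
    (hγ' : RowExcLeft A M t S N L A' M' LL ctx mc cs re γ')
    (hα : ColRowLigation A M t S N L NN LL ctx mc ce re α)
    (hα' : RowColLigation A M t S N L A' M' NN LL ctx mc cs ce re α')
    (i k h j : Fin n) (Y₀ : LL i k) (x : NN k h) (y : LL h j) :
    γ i k j Y₀ (α k h j x y) = γ' i h j (α' i k h Y₀ x) y := by
  by_cases hi : t = i
  · subst hi
    by_cases hh : t = h
    · subst hh
      refine ext_gen (re.lp_tensor k)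
        (f := fun Y₀ => γ t k j Y₀ (α k t j x y))
        (g := fun Y₀ => γ' t t j (α' t k t Y₀ x) y)
        (fun a b => by simp only [hγ.add_left])
        (fun a b => by simp only [hα'.add_left, hγ'.add_left]) ?_ Y₀
      intro l mY
      beta_reduce
      refine ext_gen (ce.π_tensor k)
        (f := fun x => γ t k j (re.lp k l mY) (α k t j x y))
        (g := fun x => γ' t t j (α' t k t (re.lp k l mY) x) y)
        (fun a b => by simp only [hα.add_left, hγ.add_right])
        (fun a b => by simp only [hα'.add_right, hγ'.add_left]) ?_ x
      intro m nn
      beta_reduce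
      refine ext_gen (re.lp_tensor j)
        (f := fun y => γ t k j (re.lp k l mY) (α k t j (ce.π k m nn) y))
        (g := fun y => γ' t t j (α' t k t (re.lp k l mY) (ce.π k m nn)) y)
        (fun a b => by simp only [hα.add_right, hγ.add_right])
        (fun a b => by simp only [hγ'.add_right]) ?_ y
      intro l₂ m'
      beta_reduce
      rw [hα.spec_t, hγ.spec_t, hα'.spec₄, hγ'.spec₄, ctx.φ_assoc, ctx.φ_smul_right]
      conv_lhs => rw [show ctx.φ t k t mY m = ctx.δ t ((ctx.δ t).symm (ctx.φ t k t mY m)) from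
          ((ctx.δ t).apply_symm_apply _).symm,
        ← ctx.δ_mul_right, ctx.φ_diag_left, mul_smul]
      conv_rhs => rw [mc.assoc_right, lp_bal, lp_bal]
    · have hh' : h ≠ t := fun h2 => hh h2.symm
      obtain ⟨X, rfl⟩ := (ce.en k h hh').surjective x
      obtain ⟨Yj, rfl⟩ := (re.el h j hh').surjective y
      refine ext_gen (re.lp_tensor k)
        (f := fun Y₀ => γ t k j Y₀ (α k h j (ce.en k h hh' X) (re.el h j hh' Yj)))
        (g := fun Y₀ => γ' t h j (α' t k h Y₀ (ce.en k h hh' X)) (re.el h j hh' Yj))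
        (fun a b => by simp only [hγ.add_left])
        (fun a b => by simp only [hα'.add_left, hγ'.add_left]) ?_ Y₀
      intro l mY
      beta_reduce
      rw [hα.spec_ne _ _ _ hh', hγ.spec_t, hα'.spec₃ _ _ hh', hγ'.spec₂ _ _ hh', ctx.φ_assoc]
  · have hi' : i ≠ t := fun h2 => hi h2.symm
    obtain ⟨Y, rfl⟩ := (re.el i k hi').surjective Y₀
    by_cases hh : t = h
    · subst hh
      refine ext_gen (ce.π_tensor k)
        (f := fun x => γ i k j (re.el i k hi' Y) (α k t j x y))
        (g := fun x => γ' i t j (α' i k t (re.el i k hi' Y) x) y)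
        (fun a b => by simp only [hα.add_left, hγ.add_right])
        (fun a b => by simp only [hα'.add_right, hγ'.add_left]) ?_ x
      intro m nn
      beta_reduce
      refine ext_gen (re.lp_tensor j)
        (f := fun y => γ i k j (re.el i k hi' Y) (α k t j (ce.π k m nn) y))
        (g := fun y => γ' i t j (α' i k t (re.el i k hi' Y) (ce.π k m nn)) y)
        (fun a b => by simp only [hα.add_right, hγ.add_right])
        (fun a b => by simp only [hγ'.add_right]) ?_ y
      intro l₂ m'
      beta_reduce
      rw [hα.spec_t, hγ.spec_ne _ _ _ hi', hα'.spec₂ _ _ hi', hγ'.spec₃ _ _ hi',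
        ← ctx.φ_smul_right, ← ctx.φ_assoc]
    · have hh' : h ≠ t := fun h2 => hh h2.symm
      obtain ⟨X, rfl⟩ := (ce.en k h hh').surjective x
      obtain ⟨Yj, rfl⟩ := (re.el h j hh').surjective y
      rw [hα.spec_ne _ _ _ hh', hγ.spec_ne _ _ _ hi', hα'.spec₁ _ _ _ hi' hh',
        hγ'.spec₁ _ _ _ hi' hh', ctx.φ_assoc]

lemma theta_swap (rr : A t) (ss : S) (ll : L) (nn : N) :
    mc.theta (op rr • ss • ll) nn = ss * mc.theta (op rr • ll) nn := by
  rw [← smul_comm ss (op rr) ll, mc.theta_left]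

lemma P2 (hc : IsComposition A M t S N L A' M' ctx mc cs ctx')
    (hβ' : ColExcRight A M t S N L A' M' NN ctx mc cs ce β')
    (hα' : RowColLigation A M t S N L A' M' NN LL ctx mc cs ce re α')
    (i k h j : Fin n) (y : LL i k) (x : NN k h) (z' : M' h j) :
    α' i k j y (β' k h j x z') = ctx'.φ i h j (α' i k h y x) z' := by
  by_cases hi : t = i
  · subst hi
    refine ext_gen (re.lp_tensor k)
      (f := fun y => α' t k j y (β' k h j x z'))
      (g := fun y => ctx'.φ t h j (α' t k h y x) z')
      (fun a b => by simp only [hα'.add_left])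
      (fun a b => by simp only [hα'.add_left, ctx'.φ_add_left]) ?_ y
    intro l₀ mY
    beta_reduce
    by_cases hh : t = h
    · subst hh
      refine ext_gen (ce.π_tensor k)
        (f := fun x => α' t k j (re.lp k l₀ mY) (β' k t j x z'))
        (g := fun x => ctx'.φ t t j (α' t k t (re.lp k l₀ mY) x) z')
        (fun a b => by simp only [hβ'.add_left, hα'.add_right])
        (fun a b => by simp only [hα'.add_right, ctx'.φ_add_left]) ?_ x
      intro m nn
      beta_reduce
      by_cases hj : t = j
      · subst hj
        obtain ⟨s, rfl⟩ := cs.uS.surjective z'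
        rw [hβ'.spec₄, hα'.spec₄, hα'.spec₄, hc.phi_ttt, mc.theta_right]
      · have hj' : j ≠ t := fun h2 => hj h2.symm
        refine ext_gen (cs.tmulL_tensor j hj')
          (f := fun z' => α' t k j (re.lp k l₀ mY) (β' k t j (ce.π k m nn) z'))
          (g := fun z' => ctx'.φ t t j (α' t k t (re.lp k l₀ mY) (ce.π k m nn)) z')
          (fun a b => by simp only [hβ'.add_right, hα'.add_right])
          (fun a b => by simp only [ctx'.φ_add_right]) ?_ z'
        intro l m'
        beta_reduce
        rw [hβ'.spec₃ _ _ hj', hα'.spec₃ _ _ hj', hα'.spec₄, hc.phi_ttj _ hj',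
          ctx.φ_assoc, ctx.φ_smul_right]
        conv_lhs => rw [show ctx.φ t k t mY m = ctx.δ t ((ctx.δ t).symm (ctx.φ t k t mY m)) from
            ((ctx.δ t).apply_symm_apply _).symm,
          ← ctx.δ_mul_right, ctx.φ_diag_left, mul_smul]
        conv_rhs => rw [mc.assoc_right, tmulL_bal, tmulL_bal]
    · have hh' : h ≠ t := fun h2 => hh h2.symm
      obtain ⟨X, rfl⟩ := (ce.en k h hh').surjective x
      by_cases hj : t = j
      · subst hj
        refine ext_gen (cs.tmulN_tensor h hh')
          (f := fun z' => α' t k t (re.lp k l₀ mY) (β' k h t (ce.en k h hh' X) z'))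
          (g := fun z' => ctx'.φ t h t (α' t k h (re.lp k l₀ mY) (ce.en k h hh' X)) z')
          (fun a b => by simp only [hβ'.add_right, hα'.add_right])
          (fun a b => by simp only [ctx'.φ_add_right]) ?_ z'
        intro mz nn
        beta_reduce
        rw [hβ'.spec₂ _ _ hh', hα'.spec₄, hα'.spec₃ _ _ hh', hc.phi_tkt _ hh', ctx.φ_assoc]
      · have hj' : j ≠ t := fun h2 => hj h2.symm
        obtain ⟨Z, rfl⟩ := (cs.ee h j hh' hj').surjective z'
        rw [hβ'.spec₁ _ _ _ hh' hj', hα'.spec₃ _ _ hj', hα'.spec₃ _ _ hh',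
          hc.phi_tkj _ _ hh' hj', ctx.φ_assoc]
  · have hi' : i ≠ t := fun h2 => hi h2.symm
    obtain ⟨Y, rfl⟩ := (re.el i k hi').surjective y
    by_cases hh : t = h
    · subst hh
      refine ext_gen (ce.π_tensor k)
        (f := fun x => α' i k j (re.el i k hi' Y) (β' k t j x z'))
        (g := fun x => ctx'.φ i t j (α' i k t (re.el i k hi' Y) x) z')
        (fun a b => by simp only [hβ'.add_left, hα'.add_right])
        (fun a b => by simp only [hα'.add_right, ctx'.φ_add_left]) ?_ x
      intro m nn
      beta_reduce
      by_cases hj : t = j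
      · subst hj
        obtain ⟨s, rfl⟩ := cs.uS.surjective z'
        rw [hβ'.spec₄, hα'.spec₂ _ _ hi', hα'.spec₂ _ _ hi', hc.phi_itt _ hi']
      · have hj' : j ≠ t := fun h2 => hj h2.symm
        refine ext_gen (cs.tmulL_tensor j hj')
          (f := fun z' => α' i k j (re.el i k hi' Y) (β' k t j (ce.π k m nn) z'))
          (g := fun z' => ctx'.φ i t j (α' i k t (re.el i k hi' Y) (ce.π k m nn)) z')
          (fun a b => by simp only [hβ'.add_right, hα'.add_right])
          (fun a b => by simp only [ctx'.φ_add_right]) ?_ z'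
        intro l m'
        beta_reduce
        rw [hβ'.spec₃ _ _ hj', hα'.spec₁ _ _ _ hi' hj', hα'.spec₂ _ _ hi',
          hc.phi_itj _ _ hi' hj', ← ctx.φ_smul_right, ← ctx.φ_assoc]
    · have hh' : h ≠ t := fun h2 => hh h2.symm
      obtain ⟨X, rfl⟩ := (ce.en k h hh').surjective x
      by_cases hj : t = j
      · subst hj
        refine ext_gen (cs.tmulN_tensor h hh')
          (f := fun z' => α' i k t (re.el i k hi' Y) (β' k h t (ce.en k h hh' X) z'))
          (g := fun z' => ctx'.φ i h t (α' i k h (re.el i k hi' Y) (ce.en k h hh' X)) z')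
          (fun a b => by simp only [hβ'.add_right, hα'.add_right])
          (fun a b => by simp only [ctx'.φ_add_right]) ?_ z'
        intro mz nn
        beta_reduce
        rw [hβ'.spec₂ _ _ hh', hα'.spec₂ _ _ hi', hα'.spec₁ _ _ _ hi' hh',
          hc.phi_ikt _ _ hi' hh', ctx.φ_assoc]
      · have hj' : j ≠ t := fun h2 => hj h2.symm
        obtain ⟨Z, rfl⟩ := (cs.ee h j hh' hj').surjective z'
        rw [hβ'.spec₁ _ _ _ hh' hj', hα'.spec₁ _ _ _ hi' hj', hα'.spec₁ _ _ _ hi' hh',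
          hc.phi_ikj _ _ _ hi' hh' hj', ctx.φ_assoc]

lemma P3 (hc : IsComposition A M t S N L A' M' ctx mc cs ctx')
    (hγ' : RowExcLeft A M t S N L A' M' LL ctx mc cs re γ')
    (hα' : RowColLigation A M t S N L A' M' NN LL ctx mc cs ce re α')
    (i h k j : Fin n) (z' : M' i h) (y : LL h k) (x : NN k j) :
    α' i k j (γ' i h k z' y) x = ctx'.φ i h j z' (α' h k j y x) := by
  by_cases hi : t = i
  · subst hi
    by_cases hh : t = h
    · subst hh
      obtain ⟨s, rfl⟩ := cs.uS.surjective z'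
      refine ext_gen (re.lp_tensor k)
        (f := fun y => α' t k j (γ' t t k (cs.uS s) y) x)
        (g := fun y => ctx'.φ t t j (cs.uS s) (α' t k j y x))
        (fun a b => by simp only [hγ'.add_right, hα'.add_left])
        (fun a b => by simp only [hα'.add_left, ctx'.φ_add_right]) ?_ y
      intro l m'
      beta_reduce
      by_cases hj : t = j
      · subst hj
        refine ext_gen (ce.π_tensor k)
          (f := fun x => α' t k t (γ' t t k (cs.uS s) (re.lp k l m')) x)
          (g := fun x => ctx'.φ t t t (cs.uS s) (α' t k t (re.lp k l m') x))
          (fun a b => by simp only [hα'.add_right])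
          (fun a b => by simp only [hα'.add_right, ctx'.φ_add_right]) ?_ x
        intro m₂ nn₂
        beta_reduce
        rw [hγ'.spec₄, hα'.spec₄, hα'.spec₄, hc.phi_ttt, theta_swap]
      · have hj' : j ≠ t := fun h2 => hj h2.symm
        obtain ⟨X, rfl⟩ := (ce.en k j hj').surjective x
        rw [hγ'.spec₄, hα'.spec₃ _ _ hj', hα'.spec₃ _ _ hj', hc.phi_ttj _ hj']
    · have hh' : h ≠ t := fun h2 => hh h2.symm
      refine ext_gen (cs.tmulL_tensor h hh')
        (f := fun z' => α' t k j (γ' t h k z' y) x)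
        (g := fun z' => ctx'.φ t h j z' (α' h k j y x))
        (fun a b => by simp only [hγ'.add_left, hα'.add_left])
        (fun a b => by simp only [ctx'.φ_add_left]) ?_ z'
      intro l mz
      beta_reduce
      obtain ⟨Y, rfl⟩ := (re.el h k hh').surjective y
      rw [hγ'.spec₂ _ _ hh']
      by_cases hj : t = j
      · subst hj
        refine ext_gen (ce.π_tensor k)
          (f := fun x => α' t k t (re.lp k l (ctx.φ t h k mz Y)) x)
          (g := fun x => ctx'.φ t h t (cs.tmulL h hh' l mz) (α' h k t (re.el h k hh' Y) x))
          (fun a b => by simp only [hα'.add_right])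
          (fun a b => by simp only [hα'.add_right, ctx'.φ_add_right]) ?_ x
        intro m₂ nn₂
        beta_reduce
        rw [hα'.spec₄, hα'.spec₂ _ _ hh', hc.phi_tkt _ hh', ctx.φ_assoc]
      · have hj' : j ≠ t := fun h2 => hj h2.symm
        obtain ⟨X, rfl⟩ := (ce.en k j hj').surjective x
        rw [hα'.spec₃ _ _ hj', hα'.spec₁ _ _ _ hh' hj', hc.phi_tkj _ _ hh' hj', ctx.φ_assoc]
  · have hi' : i ≠ t := fun h2 => hi h2.symm
    by_cases hh : t = h
    · subst hh
      refine ext_gen (cs.tmulN_tensor i hi')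
        (f := fun z' => α' i k j (γ' i t k z' y) x)
        (g := fun z' => ctx'.φ i t j z' (α' t k j y x))
        (fun a b => by simp only [hγ'.add_left, hα'.add_left])
        (fun a b => by simp only [ctx'.φ_add_left]) ?_ z'
      intro mz nn
      beta_reduce
      refine ext_gen (re.lp_tensor k)
        (f := fun y => α' i k j (γ' i t k (cs.tmulN i hi' mz nn) y) x)
        (g := fun y => ctx'.φ i t j (cs.tmulN i hi' mz nn) (α' t k j y x))
        (fun a b => by simp only [hγ'.add_right, hα'.add_left])
        (fun a b => by simp only [hα'.add_left, ctx'.φ_add_right]) ?_ y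
      intro l m'
      beta_reduce
      rw [hγ'.spec₃ _ _ hi']
      by_cases hj : t = j
      · subst hj
        refine ext_gen (ce.π_tensor k)
          (f := fun x => α' i k t (re.el i k hi' (ctx.φ i t k (op (mc.zeta nn l) • mz) m')) x)
          (g := fun x => ctx'.φ i t t (cs.tmulN i hi' mz nn) (α' t k t (re.lp k l m') x))
          (fun a b => by simp only [hα'.add_right])
          (fun a b => by simp only [hα'.add_right, ctx'.φ_add_right]) ?_ x
        intro m₂ nn₂
        beta_reduce
        rw [hα'.spec₂ _ _ hi', hα'.spec₄, hc.phi_itt _ hi', ← ctx.φ_assoc]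
        conv_lhs => rw [show ctx.φ t k t m' m₂ = ctx.δ t ((ctx.δ t).symm (ctx.φ t k t m' m₂)) from
            ((ctx.δ t).apply_symm_apply _).symm,
          ctx.φ_diag_right, tmulN_bal, tmulN_bal, mc.assoc_left, ← mc.theta_balanced]
      · have hj' : j ≠ t := fun h2 => hj h2.symm
        obtain ⟨X, rfl⟩ := (ce.en k j hj').surjective x
        rw [hα'.spec₁ _ _ _ hi' hj', hα'.spec₃ _ _ hj', hc.phi_itj _ _ hi' hj', ctx.φ_assoc]
    · have hh' : h ≠ t := fun h2 => hh h2.symm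
      obtain ⟨Z, rfl⟩ := (cs.ee i h hi' hh').surjective z'
      obtain ⟨Y, rfl⟩ := (re.el h k hh').surjective y
      rw [hγ'.spec₁ _ _ _ hi' hh']
      by_cases hj : t = j
      · subst hj
        refine ext_gen (ce.π_tensor k)
          (f := fun x => α' i k t (re.el i k hi' (ctx.φ i h k Z Y)) x)
          (g := fun x => ctx'.φ i h t (cs.ee i h hi' hh' Z) (α' h k t (re.el h k hh' Y) x))
          (fun a b => by simp only [hα'.add_right])
          (fun a b => by simp only [hα'.add_right, ctx'.φ_add_right]) ?_ x
        intro m₂ nn₂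
        beta_reduce
        rw [hα'.spec₂ _ _ hi', hα'.spec₂ _ _ hh', hc.phi_ikt _ _ hi' hh', ctx.φ_assoc]
      · have hj' : j ≠ t := fun h2 => hj h2.symm
        obtain ⟨X, rfl⟩ := (ce.en k j hj').surjective x
        rw [hα'.spec₁ _ _ _ hi' hj', hα'.spec₁ _ _ _ hh' hj',
          hc.phi_ikj _ _ _ hi' hh' hj', ctx.φ_assoc]

lemma msum_apply2 {I : Type*} {g : I → I → Type*} [∀ i j, AddCommMonoid (g i j)]
    (s : Multiset (∀ i j, g i j)) (i j : I) : s.sum i j = (s.map fun f => f i j).sum := by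
  induction s using Multiset.induction_on with
  | empty => simp
  | cons a s ih => simp [ih]

lemma a'zl (hα' : RowColLigation A M t S N L A' M' NN LL ctx mc cs ce re α')
    (i k j : Fin n) (x : NN k j) : α' i k j 0 x = 0 :=
  addhom_zero (f := fun y => α' i k j y x) (fun a b => hα'.add_left i k j a b x)

lemma a'zr (hα' : RowColLigation A M t S N L A' M' NN LL ctx mc cs ce re α')
    (i k j : Fin n) (y : LL i k) : α' i k j y 0 = 0 :=
  addhom_zero (f := fun x => α' i k j y x) (fun a b => hα'.add_right i k j y a b)

lemma azl (hα : ColRowLigation A M t S N L NN LL ctx mc ce re α)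
    (i k j : Fin n) (y : LL k j) : α i k j 0 y = 0 :=
  addhom_zero (f := fun x => α i k j x y) (fun a b => hα.add_left i k j a b y)

lemma azr (hα : ColRowLigation A M t S N L NN LL ctx mc ce re α)
    (i k j : Fin n) (x : NN i k) : α i k j x 0 = 0 :=
  addhom_zero (f := fun y => α i k j x y) (fun a b => hα.add_right i k j x a b)

lemma unitL' {Λ' : Type u} [Ring Λ'] {εΛ' : Λ' → ∀ i j, M' i j}
    (hΛ' : IsMatrixRing ctx' Λ' εΛ')
    (hc : IsComposition A M t S N L A' M' ctx mc cs ctx')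
    (hα' : RowColLigation A M t S N L A' M' NN LL ctx mc cs ce re α')
    {Abar' : (∀ i j, LL i j) → (∀ i j, NN i j) → Λ'}
    (hAbar' : ∀ y x, εΛ' (Abar' y x) = fun i j => ∑ k, α' i k j (y i k) (x k j))
    (hθ : TensorSurj mc.theta) :
    ∃ s : Multiset ((∀ i j, LL i j) × (∀ i j, NN i j)),
      (s.map fun q => Abar' q.1 q.2).sum = (1 : Λ') := by
  classical
  obtain ⟨s₀, hs₀⟩ := gen_rep mc.theta
    (fun l nn => ⟨-l, by
      have h2 := (AddMonoidHom.mk' (fun l => mc.theta l nn)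
        (fun a b => mc.theta_add_left a b nn)).map_neg l
      simpa using h2⟩) hθ (1 : S)
  set Yp : L × N → ∀ i j, LL i j :=
    fun p => Pi.single t (Pi.single t (re.lp t p.1 (ctx.δ t 1))) with hYp
  set Xp : L × N → ∀ i j, NN i j :=
    fun p => Pi.single t (Pi.single t (ce.π t (ctx.δ t 1) p.2)) with hXp
  set Yd : ∀ i j, LL i j :=
    fun i => Pi.single i (if hi : i = t then 0 else re.el i i hi (ctx.δ i 1)) with hYd
  set Xd : ∀ i j, NN i j :=
    fun i => Pi.single i (if hi : i = t then 0 else ce.en i i hi (ctx.δ i 1)) with hXd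
  have hYdt : ∀ k, Yd t k = 0 := by
    intro k
    by_cases hk : k = t
    · subst hk; simp [hYd]
    · exact Pi.single_eq_of_ne hk _
  refine ⟨(s₀.map fun p => (Yp p, Xp p)) + {(Yd, Xd)}, hΛ'.bijective.injective ?_⟩
  have hsum : ∀ u : Multiset Λ', εΛ' u.sum = (u.map εΛ').sum :=
    fun u => map_multiset_sum (AddMonoidHom.mk' εΛ' hΛ'.map_add) u
  rw [hsum, hΛ'.map_one]
  funext i j
  simp only [msum_apply2, Multiset.map_add, Multiset.map_map, Multiset.map_singleton,
    Multiset.sum_add, Multiset.sum_singleton, Function.comp, hAbar']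
  by_cases hi : t = i
  · subst hi
    by_cases hj : t = j
    · subst hj
      have h1 : ∀ p : L × N, ∑ k, α' t k t (Yp p t k) (Xp p k t) = cs.uS (mc.theta p.1 p.2) := by
        intro p
        rw [Fintype.sum_eq_single t (fun k hk => by
          have hy : Yp p t k = 0 := by
            rw [hYp]; simp only [Pi.single_eq_same]; exact Pi.single_eq_of_ne hk _
          rw [hy, a'zl hα'])]
        rw [hYp, hXp]
        simp only [Pi.single_eq_same]
        rw [hα'.spec₄, ctx.φ_diag_left, one_smul, (ctx.δ t).symm_apply_apply, op_one, one_smul]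
      have h2 : ∑ k, α' t k t (Yd t k) (Xd k t) = 0 :=
        Finset.sum_eq_zero (fun k _ => by rw [hYdt k, a'zl hα'])
      have h3 : (s₀.map fun p => ∑ k, α' t k t (Yp p t k) (Xp p k t)).sum
          = (s₀.map fun p => cs.uS (mc.theta p.1 p.2)).sum :=
        congrArg _ (Multiset.map_congr rfl fun p _ => h1 p)
      have h5 : (s₀.map fun p => cs.uS (mc.theta p.1 p.2)).sum = cs.uS 1 := by
        rw [show (s₀.map fun p => cs.uS (mc.theta p.1 p.2))
            = (s₀.map fun p => mc.theta p.1 p.2).map (⇑cs.uS) by rw [Multiset.map_map]; rfl,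
          ← map_multiset_sum cs.uS _, hs₀]
      have hm : matOne ctx' t t = cs.uS 1 := by
        simp [matOne, hc.delta_t_spec, map_one]
      rw [h2, add_zero, h3, h5, hm]
    · have hj' : j ≠ t := fun h2 => hj h2.symm
      have h1 : ∀ p : L × N, ∑ k, α' t k j (Yp p t k) (Xp p k j) = 0 := by
        intro p
        refine Finset.sum_eq_zero (fun k _ => ?_)
        by_cases hk : t = k
        · subst hk
          have hx : Xp p t j = 0 := by
            rw [hXp]; simp only [Pi.single_eq_same]; exact Pi.single_eq_of_ne hj' _
          rw [hx, a'zr hα']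
        · have hy : Yp p t k = 0 := by
            rw [hYp]; simp only [Pi.single_eq_same]
            exact Pi.single_eq_of_ne (fun h2 => hk h2.symm) _
          rw [hy, a'zl hα']
      have h2 : ∑ k, α' t k j (Yd t k) (Xd k j) = 0 :=
        Finset.sum_eq_zero (fun k _ => by rw [hYdt k, a'zl hα'])
      have hm : matOne ctx' t j = 0 := by
        have : ¬ (t = j) := hj
        simp [matOne, this]
      rw [h2, add_zero, show (s₀.map fun p => ∑ k, α' t k j (Yp p t k) (Xp p k j))
          = s₀.map (fun _ => (0 : M' t j)) from Multiset.map_congr rfl fun p _ => h1 p, hm]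
      simp
  · have hi' : i ≠ t := fun h2 => hi h2.symm
    have h1 : ∀ p : L × N, ∑ k, α' i k j (Yp p i k) (Xp p k j) = 0 := by
      intro p
      refine Finset.sum_eq_zero (fun k _ => ?_)
      have hy : Yp p i k = 0 := by
        simp [hYp, Pi.single_eq_of_ne hi']
      rw [hy, a'zl hα']
    rw [show (s₀.map fun p => ∑ k, α' i k j (Yp p i k) (Xp p k j))
        = s₀.map (fun _ => (0 : M' i j)) from Multiset.map_congr rfl fun p _ => h1 p]
    have h2 : ∑ k, α' i k j (Yd i k) (Xd k j)
        = α' i i j (re.el i i hi' (ctx.δ i 1)) (Xd i j) := by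
      rw [Fintype.sum_eq_single i (fun k hk => by
        have hy : Yd i k = 0 := Pi.single_eq_of_ne hk _
        rw [hy, a'zl hα'])]
      rw [hYd]
      simp only [Pi.single_eq_same]
      rw [dif_neg hi']
    rw [h2]
    by_cases hj : j = i
    · subst hj
      have hx : Xd j j = ce.en j j hi' (ctx.δ j 1) := by
        rw [hXd]; simp only [Pi.single_eq_same]; rw [dif_neg hi']
      have hm : matOne ctx' j j = cs.ee j j hi' hi' (ctx.δ j 1) := by
        simp [matOne, hc.delta_spec j hi', map_one]
      rw [hx, hα'.spec₁ _ _ _ hi' hi', ctx.φ_diag_left, one_smul, hm]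
      simp
    · have hx : Xd i j = 0 := Pi.single_eq_of_ne hj _
      have hm : matOne ctx' i j = 0 := by
        have : ¬ (i = j) := fun h2 => hj h2.symm
        simp [matOne, this]
      rw [hx, a'zr hα', hm]
      simp

lemma unitL {Λ : Type u} [Ring Λ] {εΛ : Λ → ∀ i j, M i j}
    (hΛ : IsMatrixRing ctx Λ εΛ)
    (hα : ColRowLigation A M t S N L NN LL ctx mc ce re α)
    {Abar : (∀ i j, NN i j) → (∀ i j, LL i j) → Λ}
    (hAbar : ∀ x y, εΛ (Abar x y) = fun i j => ∑ k, α i k j (x i k) (y k j))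
    (hζ : TensorSurj mc.zeta) :
    ∃ s : Multiset ((∀ i j, NN i j) × (∀ i j, LL i j)),
      (s.map fun q => Abar q.1 q.2).sum = (1 : Λ) := by
  classical
  obtain ⟨s₀, hs₀⟩ := gen_rep mc.zeta
    (fun nn l => ⟨-nn, by
      have h2 := (AddMonoidHom.mk' (fun nn => mc.zeta nn l)
        (fun a b => mc.zeta_add_left a b l)).map_neg nn
      simpa using h2⟩) hζ (1 : A t)
  set Xp : N × L → ∀ i j, NN i j :=
    fun p => Pi.single t (Pi.single t (ce.π t (ctx.δ t 1) p.1)) with hXp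
  set Yp : N × L → ∀ i j, LL i j :=
    fun p => Pi.single t (Pi.single t (re.lp t p.2 (ctx.δ t 1))) with hYp
  set Xd : ∀ i j, NN i j :=
    fun i => Pi.single i (if hi : i = t then 0 else ce.en i i hi (ctx.δ i 1)) with hXd
  set Yd : ∀ i j, LL i j :=
    fun i => Pi.single i (if hi : i = t then 0 else re.el i i hi (ctx.δ i 1)) with hYd
  have hXdt : ∀ k, Xd t k = 0 := by
    intro k
    by_cases hk : k = t
    · subst hk; simp [hXd]
    · exact Pi.single_eq_of_ne hk _
  refine ⟨(s₀.map fun p => (Xp p, Yp p)) + {(Xd, Yd)}, hΛ.bijective.injective ?_⟩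
  have hsum : ∀ u : Multiset Λ, εΛ u.sum = (u.map εΛ).sum :=
    fun u => map_multiset_sum (AddMonoidHom.mk' εΛ hΛ.map_add) u
  rw [hsum, hΛ.map_one]
  funext i j
  simp only [msum_apply2, Multiset.map_add, Multiset.map_map, Multiset.map_singleton,
    Multiset.sum_add, Multiset.sum_singleton, Function.comp, hAbar]
  by_cases hi : t = i
  · subst hi
    by_cases hj : t = j
    · subst hj
      have h1 : ∀ p : N × L, ∑ k, α t k t (Xp p t k) (Yp p k t) = ctx.δ t (mc.zeta p.1 p.2) := by
        intro p
        rw [Fintype.sum_eq_single t (fun k hk => by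
          have hy : Xp p t k = 0 := by
            rw [hXp]; simp only [Pi.single_eq_same]; exact Pi.single_eq_of_ne hk _
          rw [hy, azl hα])]
        rw [hXp, hYp]
        simp only [Pi.single_eq_same]
        rw [hα.spec_t, ← ctx.δ_mul_right, one_mul, ctx.φ_diag_left, ← ctx.δ_mul_left, mul_one]
      have h2 : ∑ k, α t k t (Xd t k) (Yd k t) = 0 :=
        Finset.sum_eq_zero (fun k _ => by rw [hXdt k, azl hα])
      have h3 : (s₀.map fun p => ∑ k, α t k t (Xp p t k) (Yp p k t)).sum
          = (s₀.map fun p => ctx.δ t (mc.zeta p.1 p.2)).sum :=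
        congrArg _ (Multiset.map_congr rfl fun p _ => h1 p)
      have h5 : (s₀.map fun p => ctx.δ t (mc.zeta p.1 p.2)).sum = ctx.δ t 1 := by
        rw [show (s₀.map fun p => ctx.δ t (mc.zeta p.1 p.2))
            = (s₀.map fun p => mc.zeta p.1 p.2).map (⇑(ctx.δ t)) by rw [Multiset.map_map]; rfl,
          ← map_multiset_sum (ctx.δ t) _, hs₀]
      have hm : matOne ctx t t = ctx.δ t 1 := by simp [matOne]
      rw [h2, add_zero, h3, h5, hm]
    · have hj' : j ≠ t := fun h2 => hj h2.symm
      have h1 : ∀ p : N × L, ∑ k, α t k j (Xp p t k) (Yp p k j) = 0 := by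
        intro p
        refine Finset.sum_eq_zero (fun k _ => ?_)
        by_cases hk : t = k
        · subst hk
          have hx : Yp p t j = 0 := by
            rw [hYp]; simp only [Pi.single_eq_same]; exact Pi.single_eq_of_ne hj' _
          rw [hx, azr hα]
        · have hy : Xp p t k = 0 := by
            rw [hXp]; simp only [Pi.single_eq_same]
            exact Pi.single_eq_of_ne (fun h2 => hk h2.symm) _
          rw [hy, azl hα]
      have h2 : ∑ k, α t k j (Xd t k) (Yd k j) = 0 :=
        Finset.sum_eq_zero (fun k _ => by rw [hXdt k, azl hα])
      have hm : matOne ctx t j = 0 := by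
        have : ¬ (t = j) := hj
        simp [matOne, this]
      rw [h2, add_zero, show (s₀.map fun p => ∑ k, α t k j (Xp p t k) (Yp p k j))
          = s₀.map (fun _ => (0 : M t j)) from Multiset.map_congr rfl fun p _ => h1 p, hm]
      simp
  · have hi' : i ≠ t := fun h2 => hi h2.symm
    have h1 : ∀ p : N × L, ∑ k, α i k j (Xp p i k) (Yp p k j) = 0 := by
      intro p
      refine Finset.sum_eq_zero (fun k _ => ?_)
      have hy : Xp p i k = 0 := by
        simp [hXp, Pi.single_eq_of_ne hi']
      rw [hy, azl hα]
    rw [show (s₀.map fun p => ∑ k, α i k j (Xp p i k) (Yp p k j))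
        = s₀.map (fun _ => (0 : M i j)) from Multiset.map_congr rfl fun p _ => h1 p]
    have h2 : ∑ k, α i k j (Xd i k) (Yd k j)
        = α i i j (ce.en i i hi' (ctx.δ i 1)) (Yd i j) := by
      rw [Fintype.sum_eq_single i (fun k hk => by
        have hy : Xd i k = 0 := Pi.single_eq_of_ne hk _
        rw [hy, azl hα])]
      rw [hXd]
      simp only [Pi.single_eq_same]
      rw [dif_neg hi']
    rw [h2]
    by_cases hj : j = i
    · subst hj
      have hx : Yd j j = re.el j j hi' (ctx.δ j 1) := by
        rw [hYd]; simp only [Pi.single_eq_same]; rw [dif_neg hi']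
      have hm : matOne ctx j j = ctx.δ j 1 := by simp [matOne]
      rw [hx, hα.spec_ne _ _ _ hi', ctx.φ_diag_left, one_smul, hm]
      simp
    · have hx : Yd i j = 0 := Pi.single_eq_of_ne hj _
      have hm : matOne ctx i j = 0 := by
        have : ¬ (i = j) := fun h2 => hj h2.symm
        simp [matOne, this]
      rw [hx, azr hα, hm]
      simp

section ILemmas

variable {Λ Λ' : Type u} [Ring Λ] [Ring Λ']
    {εΛ : Λ → ∀ i j, M i j} {εΛ' : Λ' → ∀ i j, M' i j}
    [Module Λ (∀ i j, NN i j)] [Module Λ'ᵐᵒᵖ (∀ i j, NN i j)]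
    [Module Λ' (∀ i j, LL i j)] [Module Λᵐᵒᵖ (∀ i j, LL i j)]
    {Abar : (∀ i j, NN i j) → (∀ i j, LL i j) → Λ}
    {Abar' : (∀ i j, LL i j) → (∀ i j, NN i j) → Λ'}

lemma I2L (hΛ' : IsMatrixRing ctx' Λ' εΛ')
    (hc : IsComposition A M t S N L A' M' ctx mc cs ctx')
    (hβ' : ColExcRight A M t S N L A' M' NN ctx mc cs ce β')
    (hα' : RowColLigation A M t S N L A' M' NN LL ctx mc cs ce re α')
    (hAbar' : ∀ y x, εΛ' (Abar' y x) = fun i j => ∑ k, α' i k j (y i k) (x k j))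
    (hNsmulR : ∀ (c' : Λ') (x : ∀ i j, NN i j) (i j : Fin n),
      (op c' • x) i j = ∑ k, β' i k j (x i k) (εΛ' c' k j))
    (y : ∀ i j, LL i j) (x : ∀ i j, NN i j) (c' : Λ') :
    Abar' y (op c' • x) = Abar' y x * c' := by
  apply hΛ'.bijective.injective
  rw [hΛ'.map_mul, hAbar', hAbar']
  funext i j
  simp only [matMul, hNsmulR]
  have e1 : ∀ k, α' i k j (y i k) (∑ h, β' k h j (x k h) (εΛ' c' h j))
      = ∑ h, α' i k j (y i k) (β' k h j (x k h) (εΛ' c' h j)) := fun k =>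
    addhom_sum (f := fun z => α' i k j (y i k) z) (fun a b => hα'.add_right _ _ _ _ a b) _ _
  have e2 : ∀ h, ctx'.φ i h j (∑ k, α' i k h (y i k) (x k h)) (εΛ' c' h j)
      = ∑ k, ctx'.φ i h j (α' i k h (y i k) (x k h)) (εΛ' c' h j) := fun h =>
    addhom_sum (f := fun z => ctx'.φ i h j z (εΛ' c' h j)) (fun a b => ctx'.φ_add_left _ _ _ a b _) _ _
  simp only [e1, e2]
  rw [Finset.sum_comm]
  exact Finset.sum_congr rfl fun a _ => Finset.sum_congr rfl fun b _ =>
    P2 hc hβ' hα' i b a j (y i b) (x b a) (εΛ' c' a j)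

lemma I1L (hβ : ColExcLeft A M t N NN ctx ce β)
    (hγ : RowExcRight A M t L LL ctx re γ)
    (hα' : RowColLigation A M t S N L A' M' NN LL ctx mc cs ce re α')
    (hΛ' : IsMatrixRing ctx' Λ' εΛ')
    (hAbar' : ∀ y x, εΛ' (Abar' y x) = fun i j => ∑ k, α' i k j (y i k) (x k j))
    (hNsmulL : ∀ (c : Λ) (x : ∀ i j, NN i j) (i j : Fin n),
      (c • x) i j = ∑ k, β i k j (εΛ c i k) (x k j))
    (hLsmulR : ∀ (c : Λ) (y : ∀ i j, LL i j) (i j : Fin n),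
      (op c • y) i j = ∑ k, γ i k j (y i k) (εΛ c k j))
    (c : Λ) (y : ∀ i j, LL i j) (x : ∀ i j, NN i j) :
    Abar' (op c • y) x = Abar' y (c • x) := by
  apply hΛ'.bijective.injective
  rw [hAbar', hAbar']
  funext i j
  simp only [hLsmulR, hNsmulL]
  have e1 : ∀ k, α' i k j (∑ h, γ i h k (y i h) (εΛ c h k)) (x k j)
      = ∑ h, α' i k j (γ i h k (y i h) (εΛ c h k)) (x k j) := fun k =>
    addhom_sum (f := fun z => α' i k j z (x k j)) (fun a b => hα'.add_left _ _ _ a b _) _ _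
  have e2 : ∀ k, α' i k j (y i k) (∑ h, β k h j (εΛ c k h) (x h j))
      = ∑ h, α' i k j (y i k) (β k h j (εΛ c k h) (x h j)) := fun k =>
    addhom_sum (f := fun z => α' i k j (y i k) z) (fun a b => hα'.add_right _ _ _ _ a b) _ _
  simp only [e1, e2]
  rw [Finset.sum_comm]
  exact Finset.sum_congr rfl fun a _ => Finset.sum_congr rfl fun b _ =>
    P1 hβ hγ hα' i a b j (εΛ c a b) (y i a) (x b j)

lemma I3L (hc : IsComposition A M t S N L A' M' ctx mc cs ctx')
    (hγ' : RowExcLeft A M t S N L A' M' LL ctx mc cs re γ')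
    (hα' : RowColLigation A M t S N L A' M' NN LL ctx mc cs ce re α')
    (hΛ' : IsMatrixRing ctx' Λ' εΛ')
    (hAbar' : ∀ y x, εΛ' (Abar' y x) = fun i j => ∑ k, α' i k j (y i k) (x k j))
    (hLsmulL : ∀ (c' : Λ') (y : ∀ i j, LL i j) (i j : Fin n),
      (c' • y) i j = ∑ k, γ' i k j (εΛ' c' i k) (y k j))
    (c' : Λ') (y : ∀ i j, LL i j) (x : ∀ i j, NN i j) :
    Abar' (c' • y) x = c' * Abar' y x := by
  apply hΛ'.bijective.injective
  rw [hΛ'.map_mul, hAbar', hAbar']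
  funext i j
  simp only [matMul, hLsmulL]
  have e1 : ∀ k, α' i k j (∑ h, γ' i h k (εΛ' c' i h) (y h k)) (x k j)
      = ∑ h, α' i k j (γ' i h k (εΛ' c' i h) (y h k)) (x k j) := fun k =>
    addhom_sum (f := fun z => α' i k j z (x k j)) (fun a b => hα'.add_left _ _ _ a b _) _ _
  have e2 : ∀ h, ctx'.φ i h j (εΛ' c' i h) (∑ k, α' h k j (y h k) (x k j))
      = ∑ k, ctx'.φ i h j (εΛ' c' i h) (α' h k j (y h k) (x k j)) := fun h =>
    addhom_sum (f := fun z => ctx'.φ i h j (εΛ' c' i h) z) (fun a b => ctx'.φ_add_right _ _ _ _ a b) _ _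
  simp only [e1, e2]
  rw [Finset.sum_comm]
  exact Finset.sum_congr rfl fun a _ => Finset.sum_congr rfl fun b _ =>
    P3 hc hγ' hα' i a b j (εΛ' c' i a) (y a b) (x b j)

lemma I4L (hβ : ColExcLeft A M t N NN ctx ce β)
    (hβ' : ColExcRight A M t S N L A' M' NN ctx mc cs ce β')
    (hα : ColRowLigation A M t S N L NN LL ctx mc ce re α)
    (hα' : RowColLigation A M t S N L A' M' NN LL ctx mc cs ce re α')
    (hAbar : ∀ x y, εΛ (Abar x y) = fun i j => ∑ k, α i k j (x i k) (y k j))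
    (hAbar' : ∀ y x, εΛ' (Abar' y x) = fun i j => ∑ k, α' i k j (y i k) (x k j))
    (hNsmulL : ∀ (c : Λ) (x : ∀ i j, NN i j) (i j : Fin n),
      (c • x) i j = ∑ k, β i k j (εΛ c i k) (x k j))
    (hNsmulR : ∀ (c' : Λ') (x : ∀ i j, NN i j) (i j : Fin n),
      (op c' • x) i j = ∑ k, β' i k j (x i k) (εΛ' c' k j))
    (y : ∀ i j, LL i j) (x x'' : ∀ i j, NN i j) :
    op (Abar' y x) • x'' = Abar x'' y • x := by
  funext i j
  rw [hNsmulR, hNsmulL]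
  simp only [hAbar, hAbar']
  have e1 : ∀ k, β' i k j (x'' i k) (∑ h, α' k h j (y k h) (x h j))
      = ∑ h, β' i k j (x'' i k) (α' k h j (y k h) (x h j)) := fun k =>
    addhom_sum (f := fun z => β' i k j (x'' i k) z) (fun a b => hβ'.add_right _ _ _ _ a b) _ _
  have e2 : ∀ h, β i h j (∑ k, α i k h (x'' i k) (y k h)) (x h j)
      = ∑ k, β i h j (α i k h (x'' i k) (y k h)) (x h j) := fun h =>
    addhom_sum (f := fun z => β i h j z (x h j)) (fun a b => hβ.add_left _ _ _ a b _) _ _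
  simp only [e1, e2]
  rw [Finset.sum_comm]
  exact Finset.sum_congr rfl fun a _ => Finset.sum_congr rfl fun b _ =>
    P4 hβ hβ' hα hα' i b a j (x'' i b) (y b a) (x a j)

lemma I5L (hγ : RowExcRight A M t L LL ctx re γ)
    (hγ' : RowExcLeft A M t S N L A' M' LL ctx mc cs re γ')
    (hα : ColRowLigation A M t S N L NN LL ctx mc ce re α)
    (hα' : RowColLigation A M t S N L A' M' NN LL ctx mc cs ce re α')
    (hAbar : ∀ x y, εΛ (Abar x y) = fun i j => ∑ k, α i k j (x i k) (y k j))
    (hAbar' : ∀ y x, εΛ' (Abar' y x) = fun i j => ∑ k, α' i k j (y i k) (x k j))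
    (hLsmulL : ∀ (c' : Λ') (y : ∀ i j, LL i j) (i j : Fin n),
      (c' • y) i j = ∑ k, γ' i k j (εΛ' c' i k) (y k j))
    (hLsmulR : ∀ (c : Λ) (y : ∀ i j, LL i j) (i j : Fin n),
      (op c • y) i j = ∑ k, γ i k j (y i k) (εΛ c k j))
    (x : ∀ i j, NN i j) (y y'' : ∀ i j, LL i j) :
    op (Abar x y) • y'' = Abar' y'' x • y := by
  funext i j
  rw [hLsmulR, hLsmulL]
  simp only [hAbar, hAbar']
  have e1 : ∀ k, γ i k j (y'' i k) (∑ h, α k h j (x k h) (y h j))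
      = ∑ h, γ i k j (y'' i k) (α k h j (x k h) (y h j)) := fun k =>
    addhom_sum (f := fun z => γ i k j (y'' i k) z) (fun a b => hγ.add_right _ _ _ _ a b) _ _
  have e2 : ∀ h, γ' i h j (∑ k, α' i k h (y'' i k) (x k h)) (y h j)
      = ∑ k, γ' i h j (α' i k h (y'' i k) (x k h)) (y h j) := fun h =>
    addhom_sum (f := fun z => γ' i h j z (y h j)) (fun a b => hγ'.add_left _ _ _ a b _) _ _
  simp only [e1, e2]
  rw [Finset.sum_comm]
  exact Finset.sum_congr rfl fun a _ => Finset.sum_congr rfl fun b _ =>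
    P5 hγ hγ' hα hα' i b a j (y'' i b) (x b a) (y a j)

lemma I2Ls (hΛ : IsMatrixRing ctx Λ εΛ)
    (hγ : RowExcRight A M t L LL ctx re γ)
    (hα : ColRowLigation A M t S N L NN LL ctx mc ce re α)
    (hAbar : ∀ x y, εΛ (Abar x y) = fun i j => ∑ k, α i k j (x i k) (y k j))
    (hLsmulR : ∀ (c : Λ) (y : ∀ i j, LL i j) (i j : Fin n),
      (op c • y) i j = ∑ k, γ i k j (y i k) (εΛ c k j))
    (x : ∀ i j, NN i j) (y : ∀ i j, LL i j) (c : Λ) :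
    Abar x (op c • y) = Abar x y * c := by
  apply hΛ.bijective.injective
  rw [hΛ.map_mul, hAbar, hAbar]
  funext i j
  simp only [matMul, hLsmulR]
  have e1 : ∀ k, α i k j (x i k) (∑ h, γ k h j (y k h) (εΛ c h j))
      = ∑ h, α i k j (x i k) (γ k h j (y k h) (εΛ c h j)) := fun k =>
    addhom_sum (f := fun z => α i k j (x i k) z) (fun a b => hα.add_right _ _ _ _ a b) _ _
  have e2 : ∀ h, ctx.φ i h j (∑ k, α i k h (x i k) (y k h)) (εΛ c h j)
      = ∑ k, ctx.φ i h j (α i k h (x i k) (y k h)) (εΛ c h j) := fun h =>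
    addhom_sum (f := fun z => ctx.φ i h j z (εΛ c h j)) (fun a b => ctx.φ_add_left _ _ _ a b _) _ _
  simp only [e1, e2]
  rw [Finset.sum_comm]
  exact Finset.sum_congr rfl fun a _ => Finset.sum_congr rfl fun b _ =>
    P6 hα hγ i b j a (εΛ c a j) (x i b) (y b a)

lemma I1Ls (hα : ColRowLigation A M t S N L NN LL ctx mc ce re α)
    (hβ' : ColExcRight A M t S N L A' M' NN ctx mc cs ce β')
    (hγ' : RowExcLeft A M t S N L A' M' LL ctx mc cs re γ')
    (hΛ : IsMatrixRing ctx Λ εΛ)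
    (hAbar : ∀ x y, εΛ (Abar x y) = fun i j => ∑ k, α i k j (x i k) (y k j))
    (hNsmulR : ∀ (c' : Λ') (x : ∀ i j, NN i j) (i j : Fin n),
      (op c' • x) i j = ∑ k, β' i k j (x i k) (εΛ' c' k j))
    (hLsmulL : ∀ (c' : Λ') (y : ∀ i j, LL i j) (i j : Fin n),
      (c' • y) i j = ∑ k, γ' i k j (εΛ' c' i k) (y k j))
    (c' : Λ') (x : ∀ i j, NN i j) (y : ∀ i j, LL i j) :
    Abar (op c' • x) y = Abar x (c' • y) := by
  apply hΛ.bijective.injective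
  rw [hAbar, hAbar]
  funext i j
  simp only [hNsmulR, hLsmulL]
  have e1 : ∀ k, α i k j (∑ h, β' i h k (x i h) (εΛ' c' h k)) (y k j)
      = ∑ h, α i k j (β' i h k (x i h) (εΛ' c' h k)) (y k j) := fun k =>
    addhom_sum (f := fun z => α i k j z (y k j)) (fun a b => hα.add_left _ _ _ a b _) _ _
  have e2 : ∀ k, α i k j (x i k) (∑ h, γ' k h j (εΛ' c' k h) (y h j))
      = ∑ h, α i k j (x i k) (γ' k h j (εΛ' c' k h) (y h j)) := fun k =>
    addhom_sum (f := fun z => α i k j (x i k) z) (fun a b => hα.add_right _ _ _ _ a b) _ _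
  simp only [e1, e2]
  rw [Finset.sum_comm]
  exact Finset.sum_congr rfl fun a _ => Finset.sum_congr rfl fun b _ =>
    P7 hα hβ' hγ' i a b j (x i a) (εΛ' c' a b) (y b j)

lemma I3Ls (hα : ColRowLigation A M t S N L NN LL ctx mc ce re α)
    (hβ : ColExcLeft A M t N NN ctx ce β)
    (hΛ : IsMatrixRing ctx Λ εΛ)
    (hAbar : ∀ x y, εΛ (Abar x y) = fun i j => ∑ k, α i k j (x i k) (y k j))
    (hNsmulL : ∀ (c : Λ) (x : ∀ i j, NN i j) (i j : Fin n),
      (c • x) i j = ∑ k, β i k j (εΛ c i k) (x k j))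
    (c : Λ) (x : ∀ i j, NN i j) (y : ∀ i j, LL i j) :
    Abar (c • x) y = c * Abar x y := by
  apply hΛ.bijective.injective
  rw [hΛ.map_mul, hAbar, hAbar]
  funext i j
  simp only [matMul, hNsmulL]
  have e1 : ∀ k, α i k j (∑ h, β i h k (εΛ c i h) (x h k)) (y k j)
      = ∑ h, α i k j (β i h k (εΛ c i h) (x h k)) (y k j) := fun k =>
    addhom_sum (f := fun z => α i k j z (y k j)) (fun a b => hα.add_left _ _ _ a b _) _ _
  have e2 : ∀ h, ctx.φ i h j (εΛ c i h) (∑ k, α h k j (x h k) (y k j))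
      = ∑ k, ctx.φ i h j (εΛ c i h) (α h k j (x h k) (y k j)) := fun h =>
    addhom_sum (f := fun z => ctx.φ i h j (εΛ c i h) z) (fun a b => ctx.φ_add_right _ _ _ _ a b) _ _
  simp only [e1, e2]
  rw [Finset.sum_comm]
  exact Finset.sum_congr rfl fun a _ => Finset.sum_congr rfl fun b _ =>
    P8 hα hβ i b j a (εΛ c i a) (x a b) (y b j)

lemma AbarAddL (hΛ : IsMatrixRing ctx Λ εΛ)
    (hα : ColRowLigation A M t S N L NN LL ctx mc ce re α)
    (hAbar : ∀ x y, εΛ (Abar x y) = fun i j => ∑ k, α i k j (x i k) (y k j))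
    (x x' : ∀ i j, NN i j) (y : ∀ i j, LL i j) :
    Abar (x + x') y = Abar x y + Abar x' y := by
  apply hΛ.bijective.injective
  rw [hΛ.map_add, hAbar, hAbar, hAbar]
  funext i j
  simp only [Pi.add_apply, ← Finset.sum_add_distrib]
  exact Finset.sum_congr rfl fun k _ => hα.add_left _ _ _ _ _ _

lemma AbarAddR (hΛ : IsMatrixRing ctx Λ εΛ)
    (hα : ColRowLigation A M t S N L NN LL ctx mc ce re α)
    (hAbar : ∀ x y, εΛ (Abar x y) = fun i j => ∑ k, α i k j (x i k) (y k j))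
    (x : ∀ i j, NN i j) (y y' : ∀ i j, LL i j) :
    Abar x (y + y') = Abar x y + Abar x y' := by
  apply hΛ.bijective.injective
  rw [hΛ.map_add, hAbar, hAbar, hAbar]
  funext i j
  simp only [Pi.add_apply, ← Finset.sum_add_distrib]
  exact Finset.sum_congr rfl fun k _ => hα.add_right _ _ _ _ _ _

lemma Abar'AddL (hΛ' : IsMatrixRing ctx' Λ' εΛ')
    (hα' : RowColLigation A M t S N L A' M' NN LL ctx mc cs ce re α')
    (hAbar' : ∀ y x, εΛ' (Abar' y x) = fun i j => ∑ k, α' i k j (y i k) (x k j))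
    (y y' : ∀ i j, LL i j) (x : ∀ i j, NN i j) :
    Abar' (y + y') x = Abar' y x + Abar' y' x := by
  apply hΛ'.bijective.injective
  rw [hΛ'.map_add, hAbar', hAbar', hAbar']
  funext i j
  simp only [Pi.add_apply, ← Finset.sum_add_distrib]
  exact Finset.sum_congr rfl fun k _ => hα'.add_left _ _ _ _ _ _

lemma Abar'AddR (hΛ' : IsMatrixRing ctx' Λ' εΛ')
    (hα' : RowColLigation A M t S N L A' M' NN LL ctx mc cs ce re α')
    (hAbar' : ∀ y x, εΛ' (Abar' y x) = fun i j => ∑ k, α' i k j (y i k) (x k j))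
    (y : ∀ i j, LL i j) (x x' : ∀ i j, NN i j) :
    Abar' y (x + x') = Abar' y x + Abar' y x' := by
  apply hΛ'.bijective.injective
  rw [hΛ'.map_add, hAbar', hAbar', hAbar']
  funext i j
  simp only [Pi.add_apply, ← Finset.sum_add_distrib]
  exact Finset.sum_congr rfl fun k _ => hα'.add_right _ _ _ _ _ _

end ILemmas

end Work

open CategoryTheory in
/-- Corollary 3.15 of the paper: if `ζ` and `θ` are surjective then
the generalised matrix rings `[A_i; M_ij]` and `[A'_i; M'_ij]` are Morita
equivalent: the tensor functors `N_m ⊗_{[A'_i; M'_ij]} −` and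
`L_m ⊗_{[A_i; M_ij]} −` are mutually quasi-inverse equivalences between the
categories of left modules. -/

theorem stmt13 {n : ℕ} {A : Fin n → Type u} {M : Fin n → Fin n → Type u}
    [∀ i, Ring (A i)] [∀ i j, AddCommGroup (M i j)]
    [∀ i j, Module (A i) (M i j)] [∀ i j, Module ((A j)ᵐᵒᵖ) (M i j)]
    [∀ i j, SMulCommClass (A i) ((A j)ᵐᵒᵖ) (M i j)]
    (ctx : GenMoritaCtx n A M) (t : Fin n)
    (S N L : Type u) [Ring S] [AddCommGroup N] [AddCommGroup L]
    [Module (A t) N] [Module Sᵐᵒᵖ N] [SMulCommClass (A t) Sᵐᵒᵖ N]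
    [Module S L] [Module ((A t)ᵐᵒᵖ) L] [SMulCommClass S ((A t)ᵐᵒᵖ) L]
    (mc : MoritaCtx (A t) S N L)
    (A' : Fin n → Type u) (M' : Fin n → Fin n → Type u)
    [∀ i, Ring (A' i)] [∀ i j, AddCommGroup (M' i j)]
    [∀ i j, Module (A' i) (M' i j)] [∀ i j, Module ((A' j)ᵐᵒᵖ) (M' i j)]
    [∀ i j, SMulCommClass (A' i) ((A' j)ᵐᵒᵖ) (M' i j)]
    (cs : CompSetup A M t S N L A' M')
    (ctx' : GenMoritaCtx n A' M')
    (hcomp : IsComposition A M t S N L A' M' ctx mc cs ctx')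
    (Λ : Type u) [Ring Λ] (εΛ : Λ → ∀ i j, M i j) (hΛ : IsMatrixRing ctx Λ εΛ)
    (Λ' : Type u) [Ring Λ'] (εΛ' : Λ' → ∀ i j, M' i j) (hΛ' : IsMatrixRing ctx' Λ' εΛ')
    (NN : Fin n → Fin n → Type u) [∀ i j, AddCommGroup (NN i j)]
    (ce : ColExc A M t N NN)
    (LL : Fin n → Fin n → Type u) [∀ i j, AddCommGroup (LL i j)]
    (re : RowExc A M t L LL)
    -- the [A_i; M_ij]–[A'_i; M'_ij]-bimodule structure on the column-excision N_m
    [Module Λ (∀ i j, NN i j)] [Module Λ'ᵐᵒᵖ (∀ i j, NN i j)]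
    [SMulCommClass Λ Λ'ᵐᵒᵖ (∀ i j, NN i j)]
    (β : ∀ i k j, M i k → NN k j → NN i j)
    (hβ : ColExcLeft A M t N NN ctx ce β)
    (β' : ∀ i k j, NN i k → M' k j → NN i j)
    (hβ' : ColExcRight A M t S N L A' M' NN ctx mc cs ce β')
    (hNsmulL : ∀ (c : Λ) (x : ∀ i j, NN i j) (i j : Fin n),
      (c • x) i j = ∑ k, β i k j (εΛ c i k) (x k j))
    (hNsmulR : ∀ (c' : Λ') (x : ∀ i j, NN i j) (i j : Fin n),
      (op c' • x) i j = ∑ k, β' i k j (x i k) (εΛ' c' k j))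
    -- the [A'_i; M'_ij]–[A_i; M_ij]-bimodule structure on the row-excision L_m
    [Module Λ' (∀ i j, LL i j)] [Module Λᵐᵒᵖ (∀ i j, LL i j)]
    [SMulCommClass Λ' Λᵐᵒᵖ (∀ i j, LL i j)]
    (γ' : ∀ i k j, M' i k → LL k j → LL i j)
    (hγ' : RowExcLeft A M t S N L A' M' LL ctx mc cs re γ')
    (γ : ∀ i k j, LL i k → M k j → LL i j)
    (hγ : RowExcRight A M t L LL ctx re γ)
    (hLsmulL : ∀ (c' : Λ') (y : ∀ i j, LL i j) (i j : Fin n),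
      (c' • y) i j = ∑ k, γ' i k j (εΛ' c' i k) (y k j))
    (hLsmulR : ∀ (c : Λ) (y : ∀ i j, LL i j) (i j : Fin n),
      (op c • y) i j = ∑ k, γ i k j (y i k) (εΛ c k j))
    -- the column-row ligation and the map |α| it induces into Λ = [A_i; M_ij]
    (α : ∀ i k j, NN i k → LL k j → M i j)
    (hα : ColRowLigation A M t S N L NN LL ctx mc ce re α)
    (Abar : (∀ i j, NN i j) → (∀ i j, LL i j) → Λ)
    (hAbar : ∀ x y, εΛ (Abar x y) = fun i j => ∑ k, α i k j (x i k) (y k j))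
    -- the row-column ligation and the map |α'| it induces into Λ' = [A'_i; M'_ij]
    (α' : ∀ i k j, LL i k → NN k j → M' i j)
    (hα' : RowColLigation A M t S N L A' M' NN LL ctx mc cs ce re α')
    (Abar' : (∀ i j, LL i j) → (∀ i j, NN i j) → Λ')
    (hAbar' : ∀ y x, εΛ' (Abar' y x) = fun i j => ∑ k, α' i k j (y i k) (x k j))
    (hζ : TensorSurj mc.zeta) (hθ : TensorSurj mc.theta)
    -- the tensor functors N_m ⊗_{[A'_i; M'_ij]} − and L_m ⊗_{[A_i; M_ij]} −
    (F : ModuleCat.{u} Λ' ⥤ ModuleCat.{u} Λ)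
    (τF : ∀ X : ModuleCat.{u} Λ', (∀ i j, NN i j) → X → F.obj X)
    (hτF : ∀ X : ModuleCat.{u} Λ',
      IsBTensor Λ' (fun (x : ∀ i j, NN i j) (c' : Λ') => op c' • x)
        (fun (c' : Λ') (v : X) => c' • v) (F.obj X) (τF X))
    (hτFl : ∀ (X : ModuleCat.{u} Λ') (c : Λ) (x : ∀ i j, NN i j) (v : X),
      c • τF X x v = τF X (c • x) v)
    (hτFnat : ∀ {X Y : ModuleCat.{u} Λ'} (f : X ⟶ Y) (x : ∀ i j, NN i j) (v : X),
      F.map f (τF X x v) = τF Y x (f v))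
    (G : ModuleCat.{u} Λ ⥤ ModuleCat.{u} Λ')
    (σG : ∀ X : ModuleCat.{u} Λ, (∀ i j, LL i j) → X → G.obj X)
    (hσG : ∀ X : ModuleCat.{u} Λ,
      IsBTensor Λ (fun (y : ∀ i j, LL i j) (c : Λ) => op c • y)
        (fun (c : Λ) (v : X) => c • v) (G.obj X) (σG X))
    (hσGl : ∀ (X : ModuleCat.{u} Λ) (c' : Λ') (y : ∀ i j, LL i j) (v : X),
      c' • σG X y v = σG X (c' • y) v)
    (hσGnat : ∀ {X Y : ModuleCat.{u} Λ} (f : X ⟶ Y) (y : ∀ i j, LL i j) (v : X),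
      G.map f (σG X y v) = σG Y y (f v)) :
    Nonempty (F ⋙ G ≅ CategoryTheory.Functor.id (ModuleCat.{u} Λ')) ∧
    Nonempty (G ⋙ F ≅ CategoryTheory.Functor.id (ModuleCat.{u} Λ)) := by
  classical
  obtain ⟨sΛ', hsΛ'⟩ := unitL' hΛ' hcomp hα' hAbar' hθ
  obtain ⟨sΛ, hsΛ⟩ := unitL hΛ hα hAbar hζ
  -- clean balanced/additive facts for the tensor exhibitions
  have τFadd : ∀ (Z : ModuleCat.{u} Λ') (x : ∀ i j, NN i j) (v v' : Z),
      τF Z x (v + v') = τF Z x v + τF Z x v' := fun Z x v v' => (hτF Z).balanced.2.1 x v v'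
  have τFbal : ∀ (Z : ModuleCat.{u} Λ') (c' : Λ') (x : ∀ i j, NN i j) (v : Z),
      τF Z (op c' • x) v = τF Z x (c' • v) := fun Z c' x v => (hτF Z).balanced.2.2 c' x v
  have σGadd : ∀ (Z : ModuleCat.{u} Λ) (y : ∀ i j, LL i j) (w w' : Z),
      σG Z y (w + w') = σG Z y w + σG Z y w' := fun Z y w w' => (hσG Z).balanced.2.1 y w w'
  have σGbal : ∀ (Z : ModuleCat.{u} Λ) (c : Λ) (y : ∀ i j, LL i j) (w : Z),
      σG Z (op c • y) w = σG Z y (c • w) := fun Z c y w => (hσG Z).balanced.2.2 c y w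
  -- KEY EQUIVALENCE 1 : G (F X) ≃ₗ[Λ'] X
  have key₁ : ∀ X : ModuleCat.{u} Λ', ∃ e : G.obj (F.obj X) ≃ₗ[Λ'] X,
      ∀ y x (v : X), e (σG (F.obj X) y (τF X x v)) = Abar' y x • v := by
    intro X
    have lift1 : ∀ y : (∀ i j, LL i j), ∃! h : F.obj X →+ X,
        ∀ x v, h (τF X x v) = Abar' y x • v := by
      intro y
      refine (hτF X).lift X (fun x v => Abar' y x • v) ?_
      refine ⟨?_, ?_, ?_⟩
      · intro m m' v
        dsimp only
        rw [Abar'AddR hΛ' hα' hAbar', add_smul]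
      · intro m v v'
        dsimp only
        rw [smul_add]
      · intro c' x v
        dsimp only
        rw [I2L hΛ' hcomp hβ' hα' hAbar' hNsmulR, mul_smul]
    obtain ⟨hy, hySpec, hyUniq⟩ : ∃ hy : (∀ i j, LL i j) → (F.obj X →+ X),
        (∀ y x v, hy y (τF X x v) = Abar' y x • v) ∧
        (∀ y (g : F.obj X →+ X), (∀ x v, g (τF X x v) = Abar' y x • v) → g = hy y) :=
      ⟨fun y => (lift1 y).choose, fun y => (lift1 y).choose_spec.1,
        fun y g hg => (lift1 y).choose_spec.2 g hg⟩
    have hyAdd : ∀ y y' (w : F.obj X), hy (y + y') w = hy y w + hy y' w := by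
      intro y y' w
      have h2 : (hy y + hy y') = hy (y + y') := hyUniq (y + y') (hy y + hy y') (fun x v => by
        rw [AddMonoidHom.add_apply, hySpec, hySpec, Abar'AddL hΛ' hα' hAbar', add_smul])
      rw [← h2, AddMonoidHom.add_apply]
    have hyBal : ∀ (c : Λ) y (w : F.obj X), hy (op c • y) w = hy y (c • w) := by
      intro c y w
      have h2 : ((hy y).comp (DistribMulAction.toAddMonoidHom (F.obj X) c)) = hy (op c • y) :=
        hyUniq _ _ (fun x v => by
          rw [AddMonoidHom.comp_apply, DistribMulAction.toAddMonoidHom_apply, hτFl, hySpec,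
            I1L hβ hγ hα' hΛ' hAbar' hNsmulL hLsmulR])
      rw [← h2, AddMonoidHom.comp_apply, DistribMulAction.toAddMonoidHom_apply]
    obtain ⟨E, hE, -⟩ := (hσG (F.obj X)).lift X (fun y w => hy y w)
      ⟨fun y y' w => hyAdd y y' w, fun y w w' => (hy y).map_add w w', fun c y w => hyBal c y w⟩
    have hlin : ∀ (c' : Λ') (u : G.obj (F.obj X)), E (c' • u) = c' • E u := by
      intro c'
      refine ext_gen (hσG (F.obj X)) (f := fun u => E (c' • u)) (g := fun u => c' • E u)
        (fun a b => by simp only [smul_add, map_add]) (fun a b => by simp only [map_add, smul_add]) ?_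
      intro y w
      beta_reduce
      rw [hσGl, hE, hE]
      refine ext_gen (hτF X) (f := fun w => hy (c' • y) w) (g := fun w => c' • hy y w)
        (fun a b => by simp only [map_add]) (fun a b => by simp only [map_add, smul_add]) ?_ w
      intro x v
      beta_reduce
      rw [hySpec, hySpec, I3L hcomp hγ' hα' hΛ' hAbar' hLsmulL, mul_smul]
    set μ : X → G.obj (F.obj X) :=
      fun v => (sΛ'.map fun q => σG (F.obj X) q.1 (τF X q.2 v)).sum with hμdef
    have hEμ : ∀ v, E (μ v) = v := by
      intro v
      simp only [hμdef]
      rw [map_multiset_sum E, Multiset.map_map]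
      have h2 : ∀ q ∈ sΛ', (⇑E ∘ fun q => σG (F.obj X) q.1 (τF X q.2 v)) q
          = Abar' q.1 q.2 • v := fun q _ => by
        simp only [Function.comp]
        rw [hE, hySpec]
      rw [Multiset.map_congr rfl h2,
        show (sΛ'.map fun q => Abar' q.1 q.2 • v)
          = (sΛ'.map fun q => Abar' q.1 q.2).map (· • v) by rw [Multiset.map_map]; rfl,
        ← Multiset.sum_smul, hsΛ', one_smul]
    have μadd : ∀ v v' : X, μ (v + v') = μ v + μ v' := by
      intro v v'
      simp only [hμdef]
      have h2 : ∀ q ∈ sΛ', σG (F.obj X) q.1 (τF X q.2 (v + v'))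
          = σG (F.obj X) q.1 (τF X q.2 v) + σG (F.obj X) q.1 (τF X q.2 v') := fun q _ => by
        rw [τFadd, σGadd]
      rw [Multiset.map_congr rfl h2, Multiset.sum_map_add]
    have hμE : ∀ u, μ (E u) = u := by
      refine ext_gen (hσG (F.obj X)) (f := fun u => μ (E u)) (g := fun u => u)
        (fun a b => by simp only [map_add, μadd]) (fun a b => rfl) ?_
      intro y w
      beta_reduce
      rw [hE]
      refine ext_gen (hτF X) (f := fun w => μ (hy y w)) (g := fun w => σG (F.obj X) y w)
        (fun a b => by simp only [map_add, μadd]) (fun a b => by simp only [σGadd]) ?_ w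
      intro x v
      beta_reduce
      rw [hySpec]; simp only [hμdef]
      have h2 : ∀ q ∈ sΛ', σG (F.obj X) q.1 (τF X q.2 (Abar' y x • v))
          = Abar' q.1 q.2 • σG (F.obj X) y (τF X x v) := fun q _ => by
        rw [← τFbal, I4L hβ hβ' hα hα' hAbar hAbar' hNsmulL hNsmulR, ← hτFl, ← σGbal,
          I5L hγ hγ' hα hα' hAbar hAbar' hLsmulL hLsmulR, ← hσGl]
      rw [Multiset.map_congr rfl h2,
        show (sΛ'.map fun q => Abar' q.1 q.2 • σG (F.obj X) y (τF X x v))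
          = (sΛ'.map fun q => Abar' q.1 q.2).map (· • σG (F.obj X) y (τF X x v)) by
            rw [Multiset.map_map]; rfl,
        ← Multiset.sum_smul, hsΛ', one_smul]
    refine ⟨LinearEquiv.ofBijective
      { toFun := ⇑E, map_add' := fun a b => E.map_add a b,
        map_smul' := fun c' u => hlin c' u }
      ⟨fun a b hab => by
        have h3 : E a = E b := hab
        have h4 := congrArg μ h3
        rwa [hμE, hμE] at h4,
      fun v => ⟨μ v, hEμ v⟩⟩, fun y x v => ?_⟩
    show E (σG (F.obj X) y (τF X x v)) = Abar' y x • v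
    rw [hE, hySpec]
  -- KEY EQUIVALENCE 2 : F (G X) ≃ₗ[Λ] X
  have key₂ : ∀ X : ModuleCat.{u} Λ, ∃ e : F.obj (G.obj X) ≃ₗ[Λ] X,
      ∀ x y (v : X), e (τF (G.obj X) x (σG X y v)) = Abar x y • v := by
    intro X
    have lift2 : ∀ x : (∀ i j, NN i j), ∃! h : G.obj X →+ X,
        ∀ y v, h (σG X y v) = Abar x y • v := by
      intro x
      refine (hσG X).lift X (fun y v => Abar x y • v) ?_
      refine ⟨?_, ?_, ?_⟩
      · intro m m' v
        dsimp only
        rw [AbarAddR hΛ hα hAbar, add_smul]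
      · intro m v v'
        dsimp only
        rw [smul_add]
      · intro c y v
        dsimp only
        rw [I2Ls hΛ hγ hα hAbar hLsmulR, mul_smul]
    obtain ⟨hx, hxSpec, hxUniq⟩ : ∃ hx : (∀ i j, NN i j) → (G.obj X →+ X),
        (∀ x y v, hx x (σG X y v) = Abar x y • v) ∧
        (∀ x (g : G.obj X →+ X), (∀ y v, g (σG X y v) = Abar x y • v) → g = hx x) :=
      ⟨fun x => (lift2 x).choose, fun x => (lift2 x).choose_spec.1,
        fun x g hg => (lift2 x).choose_spec.2 g hg⟩
    have hxAdd : ∀ x x' (w : G.obj X), hx (x + x') w = hx x w + hx x' w := by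
      intro x x' w
      have h2 : (hx x + hx x') = hx (x + x') := hxUniq (x + x') (hx x + hx x') (fun y v => by
        rw [AddMonoidHom.add_apply, hxSpec, hxSpec, AbarAddL hΛ hα hAbar, add_smul])
      rw [← h2, AddMonoidHom.add_apply]
    have hxBal : ∀ (c' : Λ') x (w : G.obj X), hx (op c' • x) w = hx x (c' • w) := by
      intro c' x w
      have h2 : ((hx x).comp (DistribMulAction.toAddMonoidHom (G.obj X) c')) = hx (op c' • x) :=
        hxUniq _ _ (fun y v => by
          rw [AddMonoidHom.comp_apply, DistribMulAction.toAddMonoidHom_apply, hσGl, hxSpec,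
            I1Ls hα hβ' hγ' hΛ hAbar hNsmulR hLsmulL])
      rw [← h2, AddMonoidHom.comp_apply, DistribMulAction.toAddMonoidHom_apply]
    obtain ⟨E, hE, -⟩ := (hτF (G.obj X)).lift X (fun x w => hx x w)
      ⟨fun x x' w => hxAdd x x' w, fun x w w' => (hx x).map_add w w', fun c' x w => hxBal c' x w⟩
    have hlin : ∀ (c : Λ) (u : F.obj (G.obj X)), E (c • u) = c • E u := by
      intro c
      refine ext_gen (hτF (G.obj X)) (f := fun u => E (c • u)) (g := fun u => c • E u)
        (fun a b => by simp only [smul_add, map_add]) (fun a b => by simp only [map_add, smul_add]) ?_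
      intro x w
      beta_reduce
      rw [hτFl, hE, hE]
      refine ext_gen (hσG X) (f := fun w => hx (c • x) w) (g := fun w => c • hx x w)
        (fun a b => by simp only [map_add]) (fun a b => by simp only [map_add, smul_add]) ?_ w
      intro y v
      beta_reduce
      rw [hxSpec, hxSpec, I3Ls hα hβ hΛ hAbar hNsmulL, mul_smul]
    set μ : X → F.obj (G.obj X) :=
      fun v => (sΛ.map fun q => τF (G.obj X) q.1 (σG X q.2 v)).sum with hμdef
    have hEμ : ∀ v, E (μ v) = v := by
      intro v
      simp only [hμdef]
      rw [map_multiset_sum E, Multiset.map_map]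
      have h2 : ∀ q ∈ sΛ, (⇑E ∘ fun q => τF (G.obj X) q.1 (σG X q.2 v)) q
          = Abar q.1 q.2 • v := fun q _ => by
        simp only [Function.comp]
        rw [hE, hxSpec]
      rw [Multiset.map_congr rfl h2,
        show (sΛ.map fun q => Abar q.1 q.2 • v)
          = (sΛ.map fun q => Abar q.1 q.2).map (· • v) by rw [Multiset.map_map]; rfl,
        ← Multiset.sum_smul, hsΛ, one_smul]
    have μadd : ∀ v v' : X, μ (v + v') = μ v + μ v' := by
      intro v v'
      simp only [hμdef]
      have h2 : ∀ q ∈ sΛ, τF (G.obj X) q.1 (σG X q.2 (v + v'))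
          = τF (G.obj X) q.1 (σG X q.2 v) + τF (G.obj X) q.1 (σG X q.2 v') := fun q _ => by
        rw [σGadd, τFadd]
      rw [Multiset.map_congr rfl h2, Multiset.sum_map_add]
    have hμE : ∀ u, μ (E u) = u := by
      refine ext_gen (hτF (G.obj X)) (f := fun u => μ (E u)) (g := fun u => u)
        (fun a b => by simp only [map_add, μadd]) (fun a b => rfl) ?_
      intro x w
      beta_reduce
      rw [hE]
      refine ext_gen (hσG X) (f := fun w => μ (hx x w)) (g := fun w => τF (G.obj X) x w)
        (fun a b => by simp only [map_add, μadd]) (fun a b => by simp only [τFadd]) ?_ w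
      intro y v
      beta_reduce
      rw [hxSpec]; simp only [hμdef]
      have h2 : ∀ q ∈ sΛ, τF (G.obj X) q.1 (σG X q.2 (Abar x y • v))
          = Abar q.1 q.2 • τF (G.obj X) x (σG X y v) := fun q _ => by
        rw [← σGbal, I5L hγ hγ' hα hα' hAbar hAbar' hLsmulL hLsmulR, ← hσGl, ← τFbal,
          I4L hβ hβ' hα hα' hAbar hAbar' hNsmulL hNsmulR, ← hτFl]
      rw [Multiset.map_congr rfl h2,
        show (sΛ.map fun q => Abar q.1 q.2 • τF (G.obj X) x (σG X y v))
          = (sΛ.map fun q => Abar q.1 q.2).map (· • τF (G.obj X) x (σG X y v)) by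
            rw [Multiset.map_map]; rfl,
        ← Multiset.sum_smul, hsΛ, one_smul]
    refine ⟨LinearEquiv.ofBijective
      { toFun := ⇑E, map_add' := fun a b => E.map_add a b,
        map_smul' := fun c u => hlin c u }
      ⟨fun a b hab => by
        have h3 : E a = E b := hab
        have h4 := congrArg μ h3
        rwa [hμE, hμE] at h4,
      fun v => ⟨μ v, hEμ v⟩⟩, fun x y v => ?_⟩
    show E (τF (G.obj X) x (σG X y v)) = Abar x y • v
    rw [hE, hxSpec]
  choose e₁ he₁ using key₁
  choose e₂ he₂ using key₂
  constructor
  · refine ⟨CategoryTheory.NatIso.ofComponents (fun X => (e₁ X).toModuleIso) ?_⟩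
    intro X Y f
    refine ModuleCat.hom_ext (LinearMap.ext fun u => ?_)
    show (e₁ Y) ((G.map (F.map f)) u) = f ((e₁ X) u)
    refine ext_gen (hσG (F.obj X))
      (f := fun u => (e₁ Y) ((G.map (F.map f)) u))
      (g := fun u => f ((e₁ X) u))
      (fun a b => by simp only [map_add]) (fun a b => by simp only [map_add]) ?_ u
    intro y w
    beta_reduce
    rw [hσGnat]
    refine ext_gen (hτF X)
      (f := fun w => (e₁ Y) (σG (F.obj Y) y ((F.map f) w)))
      (g := fun w => f ((e₁ X) (σG (F.obj X) y w)))
      (fun a b => by simp only [map_add, σGadd])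
      (fun a b => by simp only [σGadd, map_add]) ?_ w
    intro x v
    beta_reduce
    rw [hτFnat, he₁, he₁, map_smul]
  · refine ⟨CategoryTheory.NatIso.ofComponents (fun X => (e₂ X).toModuleIso) ?_⟩
    intro X Y f
    refine ModuleCat.hom_ext (LinearMap.ext fun u => ?_)
    show (e₂ Y) ((F.map (G.map f)) u) = f ((e₂ X) u)
    refine ext_gen (hτF (G.obj X))
      (f := fun u => (e₂ Y) ((F.map (G.map f)) u))
      (g := fun u => f ((e₂ X) u))
      (fun a b => by simp only [map_add]) (fun a b => by simp only [map_add]) ?_ u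
    intro x w
    beta_reduce
    rw [hτFnat]
    refine ext_gen (hσG X)
      (f := fun w => (e₂ Y) (τF (G.obj Y) x ((G.map f) w)))
      (g := fun w => f ((e₂ X) (τF (G.obj X) x w)))
      (fun a b => by simp only [map_add, τFadd])
      (fun a b => by simp only [τFadd, map_add]) ?_ w
    intro y v
    beta_reduce
    rw [hσGnat, he₂, he₂, map_smul]
end
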